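/- arXiv:1311.4989 — 8 statements merged into one kernel-verified Lean document; each statement's English description precedes it below -/
import Mathlib

section
/- Let r > 0 and let Ω ⊆ ℝⁿ be closed. Then the following are equivalent: (i) Ω is r-convex; (ii) Ω is convex and for every boundary point x of Ω and every unit normal v to Ω at x, one has Ω ⊆ B̄(x − r·v, r), where B̄(c, r) denotes the closed Euclidean ball of radius r centered at c. -/
/-!
Segments lie in every ball, so an `r`-convex set is convex. If `y ∈ Ω` lies outside
`B̄(x - r • v, r)` for a unit normal `v` at `x`, an explicit point `x + s • (l • v + (y - x))`
strictly on the outer side of the supporting hyperplane lies in every closed `r`-ball through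
`x` and `y`, hence in `Ω`, contradicting normality. Conversely, if `z ∉ Ω` lies in every
`r`-ball through `x, y ∈ Ω`, let `p` be the nearest point of `Ω` to `z`: then
`v = (z - p) / ‖z - p‖` is a unit normal at the boundary point `p`, and the supporting ball
`B̄(p - r • v, r)` contains `x` and `y` but not `z`.
-/
open Filter Metric Set
open scoped Topology RealInnerProductSpace NNReal

/-- A set `Ω` is `r`-convex if for all `x, y ∈ Ω` the intersection of all closed balls of
radius `r` containing both `x` and `y` (taken to be everything if no such ball exists)
is contained in `Ω`. -/
def RConvex {n : ℕ} (r : ℝ) (Ω : Set (EuclideanSpace ℝ (Fin n))) : Prop :=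
  ∀ x ∈ Ω, ∀ y ∈ Ω,
    {z : EuclideanSpace ℝ (Fin n) |
      ∀ c : EuclideanSpace ℝ (Fin n),
        x ∈ closedBall c r → y ∈ closedBall c r → z ∈ closedBall c r} ⊆ Ω

-- `RConvex r Ω` unfolds to `∀ x ∈ Ω, ∀ y ∈ Ω, rHull r x y ⊆ Ω`.
def rHull {α : Type*} [PseudoMetricSpace α] (r : ℝ) (x y : α) : Set α :=
  {z | ∀ c, x ∈ closedBall c r → y ∈ closedBall c r → z ∈ closedBall c r}

theorem segment_subset_rHull {F : Type*} [SeminormedAddCommGroup F] [NormedSpace ℝ F]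
    (r : ℝ) (x y : F) : segment ℝ x y ⊆ rHull r x y :=
  fun _ hz c hx hy => (convex_closedBall c r).segment_subset hx hy hz

section InnerProductSpace

variable {E : Type*} [NormedAddCommGroup E] [InnerProductSpace ℝ E]

theorem norm_smul_sub_le_of_le_two_inner {p d : E} {r s ε : ℝ} (hs₀ : 0 ≤ s) (hs₁ : s ≤ 1)
    (hsε : s * ‖p‖ ^ 2 ≤ ε) (hd : ‖d‖ ≤ r) (hpd : ε + ‖d‖ ^ 2 - r ^ 2 ≤ 2 * ⟪p, d⟫) :
    ‖s • p - d‖ ≤ r := by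
  have hr : 0 ≤ r := (norm_nonneg d).trans hd
  have hd2 : ‖d‖ ^ 2 ≤ r ^ 2 := pow_le_pow_left₀ (norm_nonneg d) hd 2
  refine le_of_sq_le_sq ?_ hr
  calc ‖s • p - d‖ ^ 2 = s * (s * ‖p‖ ^ 2) - s * (2 * ⟪p, d⟫) + ‖d‖ ^ 2 := by
        rw [norm_sub_sq_real, norm_smul, real_inner_smul_left, Real.norm_of_nonneg hs₀]; ring
    _ ≤ s * ε - s * (ε + ‖d‖ ^ 2 - r ^ 2) + ‖d‖ ^ 2 := by gcongr
    _ = (1 - s) * ‖d‖ ^ 2 + s * r ^ 2 := by ring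
    _ ≤ (1 - s) * r ^ 2 + s * r ^ 2 := by gcongr
    _ = r ^ 2 := by ring

theorem exists_inner_pos_forall_norm_sub_le {r : ℝ} (hr : 0 < r) {u v : E} (hv : ‖v‖ = 1)
    (hvu : ⟪v, u⟫ ≤ 0) (hfar : r < ‖u + r • v‖) :
    ∃ w : E, 0 < ⟪v, w⟫ ∧ ∀ d : E, ‖d‖ ≤ r → ‖u - d‖ ≤ r → ‖w - d‖ ≤ r := by
  set α := ⟪v, u⟫
  have hexcess : 0 < ‖u‖ ^ 2 + 2 * r * α := by
    have h : ‖u + r • v‖ ^ 2 = ‖u‖ ^ 2 + 2 * r * α + r ^ 2 := by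
      rw [norm_add_sq_real, real_inner_smul_right, real_inner_comm, norm_smul, hv,
        Real.norm_of_nonneg hr.le]
      ring
    nlinarith [pow_lt_pow_left₀ hfar hr.le two_ne_zero]
  -- `l` is chosen so that `2 * ε = 4 * r * ⟪v, p⟫ = ‖u + r • v‖ ^ 2 - r ^ 2 > 0`.
  set l := (‖u‖ ^ 2 - 2 * r * α) / (4 * r)
  set p := l • v + u
  set ε := ‖u‖ ^ 2 - 2 * r * l
  have h4l : 4 * r * l = ‖u‖ ^ 2 - 2 * r * α := by simp only [l]; field_simp
  have hl : 0 ≤ l := by nlinarith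
  have hε : 0 < ε := by simp only [ε]; linarith
  have hvp : 0 < ⟪v, p⟫ := by
    rw [inner_add_right, real_inner_smul_right, real_inner_self_eq_norm_sq, hv]
    nlinarith
  have hpd : ∀ d : E, ‖d‖ ≤ r → ‖u - d‖ ≤ r → ε + ‖d‖ ^ 2 - r ^ 2 ≤ 2 * ⟪p, d⟫ := by
    intro d hd hud
    have hvd : -r ≤ ⟪v, d⟫ := by
      have := neg_abs_le ⟪v, d⟫
      have := abs_real_inner_le_norm v d
      rw [hv, one_mul] at this
      linarith
    have hud2 : ‖u - d‖ ^ 2 ≤ r ^ 2 := pow_le_pow_left₀ (norm_nonneg _) hud 2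
    rw [norm_sub_sq_real] at hud2
    rw [inner_add_left, real_inner_smul_left]
    nlinarith
  set s := ε / (‖p‖ ^ 2 + ε)
  have hs₀ : 0 < s := by positivity
  have hs₁ : s ≤ 1 := div_le_one_of_le₀ (le_add_of_nonneg_left (by positivity)) (by positivity)
  have hsε : s * ‖p‖ ^ 2 ≤ ε := by
    rw [div_mul_eq_mul_div, div_le_iff₀ (by positivity)]
    nlinarith
  refine ⟨s • p, ?_, fun d hd hud => norm_smul_sub_le_of_le_two_inner hs₀.le hs₁ hsε hd
    (hpd d hd hud)⟩
  rw [real_inner_smul_right]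
  positivity

theorem exists_inner_sub_pos_mem_rHull {r : ℝ} (hr : 0 < r) {x y v : E} (hv : ‖v‖ = 1)
    (hxy : ⟪v, y - x⟫ ≤ 0) (hfar : r < dist y (x - r • v)) :
    ∃ z ∈ rHull r x y, 0 < ⟪v, z - x⟫ := by
  rw [dist_eq_norm, sub_sub_eq_add_sub, add_comm, add_sub_assoc] at hfar
  obtain ⟨w, hvw, hw⟩ := exists_inner_pos_forall_norm_sub_le hr hv hxy (by rwa [add_comm])
  refine ⟨x + w, fun c hxc hyc => ?_, by rwa [add_sub_cancel_left]⟩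
  rw [mem_closedBall, dist_eq_norm] at hxc hyc ⊢
  have := hw (c - x) (by rwa [norm_sub_rev]) (by rwa [sub_sub_sub_cancel_right])
  rwa [show x + w - c = w - (c - x) by abel]

theorem convex_of_forall_rHull_subset {r : ℝ} {Ω : Set E}
    (hΩ : ∀ x ∈ Ω, ∀ y ∈ Ω, rHull r x y ⊆ Ω) : Convex ℝ Ω :=
  convex_iff_segment_subset.mpr fun x hx y hy =>
    (segment_subset_rHull r x y).trans (hΩ x hx y hy)

theorem subset_closedBall_of_forall_rHull_subset {r : ℝ} (hr : 0 < r) {Ω : Set E}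
    (hΩ : ∀ x ∈ Ω, ∀ y ∈ Ω, rHull r x y ⊆ Ω) {x v : E} (hx : x ∈ Ω) (hv : ‖v‖ = 1)
    (hnormal : ∀ y ∈ Ω, ⟪v, y - x⟫ ≤ 0) : Ω ⊆ closedBall (x - r • v) r := by
  intro y hy
  by_contra hyb
  obtain ⟨z, hz, hvz⟩ := exists_inner_sub_pos_mem_rHull hr hv (hnormal y hy) (not_le.mp hyb)
  exact (hnormal z (hΩ x hx y hy hz)).not_gt hvz

theorem notMem_interior_of_forall_inner_sub_nonpos {s : Set E} {x v : E} (hv : v ≠ 0)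
    (h : ∀ y ∈ s, ⟪v, y - x⟫ ≤ 0) : x ∉ interior s := by
  intro hx
  have hcurve : Tendsto (fun t : ℝ => x + t • v) (𝓝[>] 0) (𝓝 x) := by
    have : Continuous fun t : ℝ => x + t • v := by fun_prop
    simpa using (this.tendsto 0).mono_left nhdsWithin_le_nhds
  obtain ⟨t, hts, ht⟩ :=
    ((hcurve.eventually (mem_interior_iff_mem_nhds.mp hx)).and self_mem_nhdsWithin).exists
  have := h _ hts
  rw [add_sub_cancel_left, real_inner_smul_right, real_inner_self_eq_norm_sq] at this
  have : 0 < t * ‖v‖ ^ 2 := mul_pos ht (by positivity)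
  linarith

theorem rHull_subset_of_forall_subset_closedBall {r : ℝ} {Ω : Set E} (hΩc : IsComplete Ω)
    (hΩ : Convex ℝ Ω)
    (hsupp : ∀ x ∈ frontier Ω, ∀ v : E, ‖v‖ = 1 →
      (∀ y ∈ Ω, ⟪v, y - x⟫ ≤ 0) → Ω ⊆ closedBall (x - r • v) r)
    {x y : E} (hx : x ∈ Ω) (hy : y ∈ Ω) : rHull r x y ⊆ Ω := by
  intro z hz
  by_contra hzΩ
  obtain ⟨p, hpΩ, hp⟩ := exists_norm_eq_iInf_of_complete_convex ⟨x, hx⟩ hΩc hΩ z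
  have hzp : z - p ≠ 0 := sub_ne_zero.mpr (ne_of_mem_of_not_mem hpΩ hzΩ).symm
  have hR : 0 < ‖z - p‖ := norm_pos_iff.mpr hzp
  set v := ‖z - p‖⁻¹ • (z - p)
  have hv : ‖v‖ = 1 := norm_smul_inv_norm hzp
  have hnormal : ∀ w ∈ Ω, ⟪v, w - p⟫ ≤ 0 := fun w hw => by
    rw [real_inner_smul_left]
    exact mul_nonpos_of_nonneg_of_nonpos (by positivity)
      ((norm_eq_iInf_iff_real_inner_le_zero hΩ hpΩ).mp hp w hw)
  have hpfr : p ∈ frontier Ω :=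
    ⟨subset_closure hpΩ,
      notMem_interior_of_forall_inner_sub_nonpos (norm_ne_zero_iff.mp (hv ▸ one_ne_zero)) hnormal⟩
  have hball := hsupp p hpfr v hv hnormal
  have hzball := hz (p - r • v) (hball hx) (hball hy)
  have hzv : z - (p - r • v) = (‖z - p‖ + r) • v := by
    rw [add_smul, smul_inv_smul₀ hR.ne']
    abel
  rw [mem_closedBall, dist_eq_norm, hzv, norm_smul, hv, mul_one, Real.norm_eq_abs] at hzball
  linarith [le_abs_self (‖z - p‖ + r)]

end InnerProductSpace

/-- Proposition 2: for a closed set `Ω ⊆ ℝⁿ` and `r > 0`, `Ω` is `r`-convex iff `Ω` is convex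
and is contained in the supporting ball `closedBall (x - r • v) r` for every boundary point `x`
and every unit normal `v` to `Ω` at `x`. -/
theorem rConvex_iff_convex_and_supporting_balls {n : ℕ} (r : ℝ) (hr : 0 < r)
    (Ω : Set (EuclideanSpace ℝ (Fin n))) (hΩ : IsClosed Ω) :
    RConvex r Ω ↔
      (Convex ℝ Ω ∧
        ∀ x ∈ frontier Ω, ∀ v : EuclideanSpace ℝ (Fin n), ‖v‖ = 1 →
          (∀ y ∈ Ω, ⟪v, y - x⟫ ≤ 0) → Ω ⊆ closedBall (x - r • v) r) := by
  constructor
  · intro h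
    exact ⟨convex_of_forall_rHull_subset h, fun x hx v hv hnormal =>
      subset_closedBall_of_forall_rHull_subset hr h (frontier_subset_iff_isClosed.mpr hΩ hx) hv
        hnormal⟩
  · rintro ⟨hconv, hsupp⟩ x hx y hy
    exact rHull_subset_of_forall_subset_closedBall hΩ.isComplete hconv hsupp hx hy
end

section
/- Let U ⊆ ℝⁿ be open, m ∈ ℕ, g₁, …, g_m : U → ℝ continuous maps that are C^{1,1}-submersions on their zero sets, and let Ω = {x ∈ U | g₁(x) ≤ 0, …, g_m(x) ≤ 0} be closed in ℝⁿ and connected. If Ω is convex, x is a boundary point of Ω, and the derivatives g_i'(x) for i ∈ A(x) are linearly independent, then for every i ∈ A(x) and every h ∈ C(x) ∩ ker g_i'(x) one has liminf_{t→0⁺} g_i'(x + t·h)h / t ≥ 0. -/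
open Filter Metric Set
open scoped Topology RealInnerProductSpace NNReal

/-!
Fix the active constraint `f = gᵢ`, the critical direction `h`, and `v` with `f'(x) v = 1`.
Since `f'` is Lipschitz, `f` is affine of slope one in the direction `v` up to `O(t³)` on the
points `x + σ h + s v` with `0 ≤ σ ≤ t` and `|s| = O(t²)`. Hence
`z = x + t h - (f(x + t h) + C t³) v` satisfies `f z ≤ 0`; if moreover `h` points strictly into
every other active constraint, then `z ∈ Ω`, and by convexity so is the segment `[x, z]`.
Read through `u(σ) = f(x + σ h)`, this says `u(θ t) ≤ θ u(t) + O(t³)`: `u` lies below its chords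
from `0`. Together with `u(0) = u'(0) = 0` and `u'` Lipschitz, this forces `u'(t)² = O(t³)`
whenever `u'(t) < 0`, so `u'(t) / t ≥ -O(√t)`.

A general critical direction `h` is the limit of the directions `h + ε w`, where the linear
independence of the active derivatives provides `w` with `f'(x) w = 0` and `gⱼ'(x) w = -1` for
the other active `j`; and `f'(x + t h) h / t` moves by `O(ε)` when `h` moves by `ε w`.
-/

/-- `g` is a `C^{1,1}`-submersion on its zero set (relative to the open set `U`): for
every zero `x ∈ U` of `g`, `g` is differentiable with Lipschitz continuous derivative on a
neighborhood of `x`, and the derivative of `g` at `x` is surjective (i.e. nonzero). -/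
def C11SubmersionOnZeroSet {n : ℕ} (U : Set (EuclideanSpace ℝ (Fin n)))
    (g : EuclideanSpace ℝ (Fin n) → ℝ) : Prop :=
  ∀ x ∈ U, g x = 0 →
    (∃ V, IsOpen V ∧ x ∈ V ∧ V ⊆ U ∧ (∀ y ∈ V, DifferentiableAt ℝ g y) ∧
      ∃ K : ℝ≥0, LipschitzOnWith K (fun y => fderiv ℝ g y) V) ∧
    fderiv ℝ g x ≠ 0

section OneDim

variable {u u' : ℝ → ℝ} {L : ℝ≥0} {t : ℝ}

theorem abs_le_mul_sq_of_lipschitzOnWith_deriv (hu : ∀ σ ∈ Icc 0 t, HasDerivAt u (u' σ) σ)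
    (hlip : LipschitzOnWith L u' (Icc 0 t)) (hu0 : u 0 = 0) (hu'0 : u' 0 = 0) {σ : ℝ}
    (hσ : σ ∈ Icc 0 t) : |u σ| ≤ L * σ ^ 2 := by
  have hsub : Icc 0 σ ⊆ Icc 0 t := Icc_subset_Icc_right hσ.2
  have hbound : ∀ τ ∈ Ico 0 σ, ‖u' τ‖ ≤ L * σ := fun τ hτ => by
    have := hlip.norm_sub_le (hsub (Ico_subset_Icc_self hτ)) (left_mem_Icc.2 (hσ.1.trans hσ.2))
    rw [hu'0, sub_zero, sub_zero, Real.norm_of_nonneg hτ.1] at this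
    exact this.trans (by gcongr; exact hτ.2.le)
  have := norm_image_sub_le_of_norm_deriv_le_segment'
    (fun τ hτ => (hu τ (hsub hτ)).hasDerivWithinAt) hbound σ (right_mem_Icc.2 hσ.1)
  rw [hu0, sub_zero, sub_zero, Real.norm_eq_abs] at this
  linarith

theorem sub_le_mul_sub_of_hasDerivAt_le {a b B : ℝ} (hab : a ≤ b)
    (hu : ∀ σ ∈ Icc a b, HasDerivAt u (u' σ) σ) (hB : ∀ σ ∈ Ioo a b, u' σ ≤ B) :
    u b - u a ≤ B * (b - a) :=
  (convex_Icc a b).image_sub_le_mul_sub_of_deriv_le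
    (fun σ hσ => (hu σ hσ).continuousAt.continuousWithinAt)
    (fun σ hσ => (hu σ (interior_subset hσ)).differentiableAt.differentiableWithinAt)
    (fun σ hσ => by
      rw [interior_Icc] at hσ
      rw [(hu σ (Ioo_subset_Icc_self hσ)).deriv]
      exact hB σ hσ)
    a (left_mem_Icc.2 hab) b (right_mem_Icc.2 hab) hab

theorem sq_le_of_le_chord (ht : 0 ≤ t) (hu : ∀ σ ∈ Icc 0 t, HasDerivAt u (u' σ) σ)
    (hlip : LipschitzOnWith L u' (Icc 0 t)) (hu0 : u 0 = 0) (hu'0 : u' 0 = 0) {M : ℝ}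
    (hchord : ∀ θ ∈ Ioc (0 : ℝ) 1, u (θ * t) ≤ θ * u t + M) (hneg : u' t < 0) :
    u' t ^ 2 ≤ 24 * L * M := by
  set a := -u' t with ha_def
  have ha : 0 < a := neg_pos.2 hneg
  have hu'_le : ∀ σ ∈ Icc 0 t, u' σ ≤ -a + L * (t - σ) := fun σ hσ => by
    have := hlip.norm_sub_le hσ (right_mem_Icc.2 ht)
    rw [Real.norm_eq_abs, Real.norm_of_nonpos (by linarith [hσ.2])] at this
    linarith [le_abs_self (u' σ - u' t)]
  have haL : a ≤ L * t := by linarith [hu'_le 0 (left_mem_Icc.2 ht)]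
  have hLt : 0 < (L : ℝ) * t := ha.trans_le haL
  set δ := a / (2 * (L * t)) with hδ_def
  have hδ : 0 < δ := by positivity
  have hδ_le : δ ≤ 1 / 2 := by
    rw [hδ_def, div_le_iff₀ (by positivity)]; linarith
  have hLδ : L * δ * t = a / 2 := by
    calc (L : ℝ) * δ * t = a / 2 * ((L * t) / (L * t)) := by rw [hδ_def]; ring
      _ = a / 2 := by rw [div_self hLt.ne', mul_one]
  -- the choice of `δ` keeps `u' ≤ -a/2` on `[(1 - δ) t, t]`
  have hdrop : u t - u ((1 - δ) * t) ≤ -(a / 2) * (t - (1 - δ) * t) := by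
    have hsub : Icc ((1 - δ) * t) t ⊆ Icc 0 t :=
      Icc_subset_Icc_left (mul_nonneg (by linarith) ht)
    refine sub_le_mul_sub_of_hasDerivAt_le (by nlinarith) (fun σ hσ => hu σ (hsub hσ))
      fun σ hσ => ?_
    have := hu'_le σ (hsub (Ioo_subset_Icc_self hσ))
    nlinarith [hσ.1, L.coe_nonneg]
  have hlow : -(L * (δ / 2 * t) ^ 2) ≤ u (δ / 2 * t) :=
    neg_le_of_abs_le (abs_le_mul_sq_of_lipschitzOnWith_deriv hu hlip hu0 hu'0
      ⟨by positivity, by nlinarith⟩)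
  have hsq : (L : ℝ) * (δ / 2 * t) ^ 2 = a * δ * t / 8 := by
    rw [show (L : ℝ) * (δ / 2 * t) ^ 2 = (L * δ * t) * (δ * t) / 4 by ring, hLδ]; ring
  have h₁ := hchord (1 - δ) ⟨by linarith, by linarith⟩
  have h₂ := hchord (δ / 2) ⟨by positivity, by linarith⟩
  have key : a * δ * t ≤ 12 * M := by linarith
  calc u' t ^ 2 = 2 * L * (a * δ * t) := by
        rw [show 2 * (L : ℝ) * (a * δ * t) = 2 * a * (L * δ * t) by ring, hLδ, ha_def]; ring
    _ ≤ 2 * L * (12 * M) := by gcongr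
    _ = 24 * L * M := by ring

end OneDim

section NormedSpace

variable {E F : Type*} [NormedAddCommGroup E] [NormedSpace ℝ E]
  [NormedAddCommGroup F] [NormedSpace ℝ F]

theorem norm_sub_sub_fderiv_le {f : E → F} {V : Set E} {K : ℝ≥0} (hV : Convex ℝ V)
    (hf : ∀ y ∈ V, DifferentiableAt ℝ f y) (hlip : LipschitzOnWith K (fderiv ℝ f) V)
    {x y w : E} (hx : x ∈ V) (hy : y ∈ V) (hyw : y + w ∈ V) :
    ‖f (y + w) - f y - fderiv ℝ f x w‖ ≤ K * (‖y - x‖ + ‖w‖) * ‖w‖ := by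
  have hseg : segment ℝ y (y + w) ⊆ V := hV.segment_subset hy hyw
  have hbound : ∀ z ∈ segment ℝ y (y + w),
      ‖fderiv ℝ f z - fderiv ℝ f x‖ ≤ K * (‖y - x‖ + ‖w‖) := fun z hz => by
    have hzy : ‖z - y‖ ≤ ‖w‖ := by
      have := dist_add_dist_of_mem_segment hz
      rw [dist_eq_norm, dist_eq_norm, dist_eq_norm, sub_add_cancel_left, norm_neg,
        norm_sub_rev] at this
      linarith [norm_nonneg (z - (y + w))]
    calc ‖fderiv ℝ f z - fderiv ℝ f x‖ ≤ K * ‖z - x‖ := hlip.norm_sub_le (hseg hz) hx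
      _ ≤ K * (‖y - x‖ + ‖w‖) := by
        gcongr
        calc ‖z - x‖ = ‖(z - y) + (y - x)‖ := by rw [sub_add_sub_cancel]
          _ ≤ ‖y - x‖ + ‖w‖ := by linarith [norm_add_le (z - y) (y - x)]
  simpa using (convex_segment y (y + w)).norm_image_sub_le_of_norm_hasFDerivWithin_le'
    (fun z hz => (hf z (hseg hz)).hasFDerivAt.hasFDerivWithinAt) hbound
    (left_mem_segment ℝ y (y + w)) (right_mem_segment ℝ y (y + w))

theorem hasDerivAt_comp_add_smul {f : E → F} {x h : E} {t : ℝ}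
    (hf : DifferentiableAt ℝ f (x + t • h)) :
    HasDerivAt (fun σ : ℝ => f (x + σ • h)) (fderiv ℝ f (x + t • h) h) t := by
  have hline : HasDerivAt (fun σ : ℝ => x + σ • h) h t := by
    simpa using ((hasDerivAt_id t).smul_const h).const_add x
  exact hf.hasFDerivAt.comp_hasDerivAt t hline

theorem lipschitzOnWith_fderiv_comp_add_smul {f : E → F} {V : Set E} {K : ℝ≥0}
    (hlip : LipschitzOnWith K (fderiv ℝ f) V) {x h : E} {s : Set ℝ}
    (hs : ∀ σ ∈ s, x + σ • h ∈ V) :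
    LipschitzOnWith (K * ‖h‖₊ * ‖h‖₊) (fun σ => fderiv ℝ f (x + σ • h) h) s := by
  refine LipschitzOnWith.of_dist_le_mul fun σ hσ τ hτ => ?_
  rw [dist_eq_norm, dist_eq_norm, ← sub_apply]
  calc ‖(fderiv ℝ f (x + σ • h) - fderiv ℝ f (x + τ • h)) h‖
      ≤ ‖fderiv ℝ f (x + σ • h) - fderiv ℝ f (x + τ • h)‖ * ‖h‖ :=
        ContinuousLinearMap.le_opNorm _ _
    _ ≤ K * ‖(x + σ • h) - (x + τ • h)‖ * ‖h‖ := by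
        gcongr; exact hlip.norm_sub_le (hs σ hσ) (hs τ hτ)
    _ = K * ‖h‖ * ‖h‖ * ‖σ - τ‖ := by
        rw [add_sub_add_left_eq_sub, ← sub_smul, norm_smul]; ring

theorem norm_fderiv_comp_add_smul_sub_le {f : E → F} {V : Set E} {K : ℝ≥0}
    (hlip : LipschitzOnWith K (fderiv ℝ f) V) {x h k : E} {t : ℝ} (ht : 0 ≤ t) (hx : x ∈ V)
    (hh : x + t • h ∈ V) (hk : x + t • k ∈ V) (hhk : fderiv ℝ f x h = fderiv ℝ f x k) :
    ‖fderiv ℝ f (x + t • h) h - fderiv ℝ f (x + t • k) k‖ ≤ K * t * ‖h - k‖ * (‖h‖ + ‖k‖) := by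
  have hsplit : fderiv ℝ f (x + t • h) h - fderiv ℝ f (x + t • k) k =
      (fderiv ℝ f (x + t • h) - fderiv ℝ f (x + t • k)) h
        + (fderiv ℝ f (x + t • k) - fderiv ℝ f x) (h - k) := by
    simp only [sub_apply, map_sub, hhk]; abel
  have h₁ : ‖(fderiv ℝ f (x + t • h) - fderiv ℝ f (x + t • k)) h‖ ≤ K * (t * ‖h - k‖) * ‖h‖ :=
    calc _ ≤ ‖fderiv ℝ f (x + t • h) - fderiv ℝ f (x + t • k)‖ * ‖h‖ :=
          ContinuousLinearMap.le_opNorm _ _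
      _ ≤ K * ‖(x + t • h) - (x + t • k)‖ * ‖h‖ := by gcongr; exact hlip.norm_sub_le hh hk
      _ = K * (t * ‖h - k‖) * ‖h‖ := by
          rw [add_sub_add_left_eq_sub, ← smul_sub, norm_smul, Real.norm_of_nonneg ht]
  have h₂ : ‖(fderiv ℝ f (x + t • k) - fderiv ℝ f x) (h - k)‖ ≤ K * (t * ‖k‖) * ‖h - k‖ :=
    calc _ ≤ ‖fderiv ℝ f (x + t • k) - fderiv ℝ f x‖ * ‖h - k‖ :=
          ContinuousLinearMap.le_opNorm _ _
      _ ≤ K * ‖(x + t • k) - x‖ * ‖h - k‖ := by gcongr; exact hlip.norm_sub_le hk hx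
      _ = K * (t * ‖k‖) * ‖h - k‖ := by
          rw [add_sub_cancel_left, norm_smul, Real.norm_of_nonneg ht]
  rw [hsplit]
  linarith [norm_add_le ((fderiv ℝ f (x + t • h) - fderiv ℝ f (x + t • k)) h)
    ((fderiv ℝ f (x + t • k) - fderiv ℝ f x) (h - k))]

theorem eventually_add_smul_add_mem {N : Set E} {x : E} (hN : N ∈ 𝓝 x) (h : E) (A : ℝ) :
    ∀ᶠ t in 𝓝 (0 : ℝ), ∀ σ ∈ Icc 0 t, ∀ w : E, ‖w‖ ≤ A * t ^ 2 → x + σ • h + w ∈ N := by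
  obtain ⟨r, hr, hball⟩ := Metric.mem_nhds_iff.1 hN
  have hlim : Tendsto (fun t : ℝ => t * ‖h‖ + A * t ^ 2) (𝓝 0) (𝓝 0) :=
    (Continuous.tendsto' (by fun_prop) 0 0 (by simp))
  filter_upwards [hlim.eventually_lt_const hr] with t ht σ hσ w hw
  apply hball
  rw [mem_ball, dist_eq_norm, add_assoc, add_sub_cancel_left]
  calc ‖σ • h + w‖ ≤ ‖σ • h‖ + ‖w‖ := norm_add_le _ _
    _ ≤ t * ‖h‖ + A * t ^ 2 := by
        rw [norm_smul, Real.norm_of_nonneg hσ.1]; gcongr; exact hσ.2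
    _ < r := ht

theorem eventually_add_smul_mem {N : Set E} {x : E} (hN : N ∈ 𝓝 x) (h : E) :
    ∀ᶠ t in 𝓝 (0 : ℝ), ∀ σ ∈ Icc 0 t, x + σ • h ∈ N :=
  (eventually_add_smul_add_mem hN h 0).mono fun _ ht σ hσ => by simpa using ht σ hσ 0 (by simp)

theorem eventually_apply_add_smul_add_neg {f : E → ℝ} {x h : E} (hf : DifferentiableAt ℝ f x)
    (hfx : f x = 0) (hh : fderiv ℝ f x h < 0) (A : ℝ) :
    ∀ᶠ t in 𝓝[>] (0 : ℝ), ∀ w : E, ‖w‖ ≤ A * t ^ 2 → f (x + t • h + w) < 0 := by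
  set a := -fderiv ℝ f x h with ha_def
  have ha : 0 < a := neg_pos.2 hh
  set ε := a / (4 * (‖h‖ + 1))
  have hε : 0 < ε := by positivity
  have hεh : ε * (‖h‖ + 1) = a / 4 := by simp only [ε]; field_simp
  have hN : ∀ᶠ y in 𝓝 x, ‖f y - f x - fderiv ℝ f x (y - x)‖ ≤ ε * ‖y - x‖ :=
    hf.hasFDerivAt.isLittleO.bound hε
  have hsmall : ∀ᶠ t in 𝓝 (0 : ℝ), A * t < 1 ∧ ‖fderiv ℝ f x‖ * A * t < a / 4 :=
    ((Continuous.tendsto' (by fun_prop) 0 0 (by simp)).eventually_lt_const one_pos).and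
      ((Continuous.tendsto' (by fun_prop) 0 0 (by simp)).eventually_lt_const (by positivity))
  filter_upwards [(eventually_add_smul_add_mem hN h A).filter_mono nhdsWithin_le_nhds,
    hsmall.filter_mono nhdsWithin_le_nhds, self_mem_nhdsWithin]
    with t hNt ⟨hA₁, hA₂⟩ (ht : 0 < t) w hw
  have hy := hNt t ⟨ht.le, le_rfl⟩ w hw
  rw [hfx, sub_zero, add_assoc, add_sub_cancel_left, map_add, map_smul, smul_eq_mul] at hy
  have hwt : ‖w‖ ≤ t := by nlinarith [norm_nonneg w]
  have hlin : fderiv ℝ f x w ≤ t * (a / 4) := by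
    calc fderiv ℝ f x w ≤ ‖fderiv ℝ f x‖ * ‖w‖ :=
          (Real.le_norm_self _).trans (ContinuousLinearMap.le_opNorm _ _)
      _ ≤ ‖fderiv ℝ f x‖ * (A * t ^ 2) := by gcongr
      _ ≤ t * (a / 4) := by nlinarith
  have hrem : ε * ‖t • h + w‖ ≤ t * (a / 4) := by
    calc ε * ‖t • h + w‖ ≤ ε * (t * ‖h‖ + t) := by
          gcongr
          calc ‖t • h + w‖ ≤ ‖t • h‖ + ‖w‖ := norm_add_le _ _
            _ ≤ t * ‖h‖ + t := by rw [norm_smul, Real.norm_of_nonneg ht.le]; gcongr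
      _ = t * (a / 4) := by rw [← hεh]; ring
  have hth : t * fderiv ℝ f x h = -(t * a) := by rw [ha_def]; ring
  rw [add_assoc]
  linarith [le_of_abs_le (Real.norm_eq_abs _ ▸ hy), mul_pos ht ha]

theorem eventually_mem_of_fderiv_neg {ι : Type*} [Finite ι] {U : Set E} (hU : IsOpen U)
    {g : ι → E → ℝ} (hgc : ∀ j, ContinuousOn (g j) U) {x h : E} (hxU : x ∈ U)
    (hxg : ∀ j, g j x ≤ 0) (i : ι)
    (hact : ∀ j ≠ i, g j x = 0 → DifferentiableAt ℝ (g j) x ∧ fderiv ℝ (g j) x h < 0)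
    (A : ℝ) :
    ∀ᶠ t in 𝓝[>] (0 : ℝ), ∀ w : E, ‖w‖ ≤ A * t ^ 2 → g i (x + t • h + w) ≤ 0 →
      x + t • h + w ∈ {y | y ∈ U ∧ ∀ j, g j y ≤ 0} := by
  have hinactive : ∀ᶠ y in 𝓝 x, y ∈ U ∧ ∀ j, g j x < 0 → g j y < 0 := by
    refine (hU.eventually_mem hxU).and (eventually_all.2 fun j => ?_)
    by_cases hj : g j x < 0
    · exact (((hgc j).continuousAt (hU.mem_nhds hxU)).eventually_lt_const hj).mono
        fun _ hy _ => hy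
    · exact Eventually.of_forall fun _ hj' => absurd hj' hj
  have hactive : ∀ᶠ t in 𝓝[>] (0 : ℝ), ∀ j, j ≠ i → g j x = 0 →
      ∀ w : E, ‖w‖ ≤ A * t ^ 2 → g j (x + t • h + w) < 0 := by
    refine eventually_all.2 fun j => ?_
    by_cases hj : j ≠ i ∧ g j x = 0
    · obtain ⟨hdiff, hneg⟩ := hact j hj.1 hj.2
      exact (eventually_apply_add_smul_add_neg hdiff hj.2 hneg A).mono fun _ ht _ _ => ht
    · exact Eventually.of_forall fun _ hji hj0 => absurd ⟨hji, hj0⟩ hj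
  filter_upwards [(eventually_add_smul_add_mem hinactive h A).filter_mono nhdsWithin_le_nhds,
    hactive, self_mem_nhdsWithin] with t hnear hneg (ht : 0 < t) w hw hi
  obtain ⟨hyU, hyneg⟩ := hnear t ⟨ht.le, le_rfl⟩ w hw
  refine ⟨hyU, fun j => ?_⟩
  rcases eq_or_ne j i with rfl | hji
  · exact hi
  rcases (hxg j).lt_or_eq with hlt | heq
  · exact (hyneg j hlt).le
  · exact (hneg j hji heq w hw).le

theorem exists_eventually_abs_sub_sub_le {f : E → ℝ} {V : Set E} {x : E} (hV : V ∈ 𝓝 x)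
    (hf : ∀ y ∈ V, DifferentiableAt ℝ f y) {K : ℝ≥0} (hlip : LipschitzOnWith K (fderiv ℝ f) V)
    {v : E} (hv : fderiv ℝ f x v = 1) (h : E) {A : ℝ} (hA : 0 ≤ A) :
    ∃ C, 0 ≤ C ∧ ∀ᶠ t in 𝓝[>] (0 : ℝ), ∀ σ ∈ Icc 0 t, ∀ s : ℝ, |s| ≤ A * t ^ 2 →
      |f (x + σ • h + s • v) - f (x + σ • h) - s| ≤ C * t ^ 3 := by
  obtain ⟨r, hr, hball⟩ := Metric.mem_nhds_iff.1 hV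
  have hB := ball_mem_nhds x hr
  refine ⟨K * (‖h‖ + A * ‖v‖) * (A * ‖v‖), by positivity, ?_⟩
  filter_upwards [(eventually_add_smul_mem hB h).filter_mono nhdsWithin_le_nhds,
    (eventually_add_smul_add_mem hB h (A * ‖v‖)).filter_mono nhdsWithin_le_nhds,
    self_mem_nhdsWithin, (eventually_le_nhds zero_lt_one).filter_mono nhdsWithin_le_nhds]
    with t hy hyw (ht : 0 < t) ht₁ σ hσ s hs
  have hsv : ‖s • v‖ ≤ A * t ^ 2 * ‖v‖ := by rw [norm_smul, Real.norm_eq_abs]; gcongr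
  have := norm_sub_sub_fderiv_le (convex_ball x r) (fun y hy => hf y (hball hy))
    (hlip.mono hball) (mem_ball_self hr) (hy σ hσ) (hyw σ hσ (s • v) (by linarith))
  rw [map_smul, hv, smul_eq_mul, mul_one, add_sub_cancel_left, Real.norm_eq_abs] at this
  refine this.trans ?_
  have hσh : ‖σ • h‖ ≤ t * ‖h‖ := by
    rw [norm_smul, Real.norm_of_nonneg hσ.1]; gcongr; exact hσ.2
  have ht2 : t ^ 2 ≤ t := by nlinarith
  calc (K : ℝ) * (‖σ • h‖ + ‖s • v‖) * ‖s • v‖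
      ≤ K * (t * ‖h‖ + A * t * ‖v‖) * (A * t ^ 2 * ‖v‖) := by
        gcongr
        calc ‖s • v‖ ≤ A * t ^ 2 * ‖v‖ := hsv
          _ ≤ A * t * ‖v‖ := by gcongr
    _ = K * (‖h‖ + A * ‖v‖) * (A * ‖v‖) * t ^ 3 := by ring

theorem le_chord_of_convex {f : E → ℝ} {Ω : Set E} (hconv : Convex ℝ Ω)
    (hΩ : ∀ y ∈ Ω, f y ≤ 0) {x h v : E} (hx : x ∈ Ω) {t A C : ℝ} (ht : 0 ≤ t) (hC : 0 ≤ C)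
    (haff : ∀ σ ∈ Icc 0 t, ∀ s : ℝ, |s| ≤ A * t ^ 2 →
      |f (x + σ • h + s • v) - f (x + σ • h) - s| ≤ C * t ^ 3)
    (hs : |f (x + t • h) + C * t ^ 3| ≤ A * t ^ 2)
    (hmem : ∀ s : ℝ, |s| ≤ A * t ^ 2 → f (x + t • h + s • v) ≤ 0 → x + t • h + s • v ∈ Ω) :
    ∀ θ ∈ Ioc (0 : ℝ) 1, f (x + (θ * t) • h) ≤ θ * f (x + t • h) + 2 * C * t ^ 3 := by
  intro θ hθ
  set s := -(f (x + t • h) + C * t ^ 3) with hs_def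
  have hs' : |s| ≤ A * t ^ 2 := by rwa [abs_neg]
  have hz : x + t • h + s • v ∈ Ω := by
    refine hmem s hs' ?_
    linarith [(abs_le.1 (haff t ⟨ht, le_rfl⟩ s hs')).2]
  have hθs : |θ * s| ≤ A * t ^ 2 := by
    rw [abs_mul, abs_of_pos hθ.1]
    exact (mul_le_of_le_one_left (abs_nonneg s) hθ.2).trans hs'
  have hp : x + θ • (x + t • h + s • v - x) = x + (θ * t) • h + (θ * s) • v := by module
  have hfp := hΩ _ (hconv.add_smul_sub_mem hx hz ⟨hθ.1.le, hθ.2⟩)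
  rw [hp] at hfp
  have hθt : θ * t ∈ Icc 0 t := ⟨by nlinarith [hθ.1], mul_le_of_le_one_left ht hθ.2⟩
  have hCt : θ * (C * t ^ 3) ≤ C * t ^ 3 := mul_le_of_le_one_left (by positivity) hθ.2
  have hθs_eq : θ * s = -(θ * f (x + t • h)) - θ * (C * t ^ 3) := by rw [hs_def]; ring
  linarith [(abs_le.1 (haff (θ * t) hθt (θ * s) hθs)).1]

theorem exists_forall_apply_eq_of_linearIndependent {ι : Type*} [Finite ι]
    {φ : ι → E →L[ℝ] ℝ} (hφ : LinearIndependent ℝ φ) (c : ι → ℝ) :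
    ∃ w : E, ∀ j, φ j w = c j := by
  have hli : LinearIndependent ℝ (fun j => (φ j : E → ℝ)) :=
    hφ.map' ((LinearMap.ltoFun ℝ E ℝ ℝ).comp (ContinuousLinearMap.coeLM ℝ))
      (LinearMap.ker_eq_bot.2 fun a b hab => ContinuousLinearMap.ext (congrFun hab))
  have hrange : LinearMap.range (LinearMap.pi fun j => (φ j : E →ₗ[ℝ] ℝ)) = ⊤ := by
    rw [eq_top_iff, ← span_flip_eq_top_iff_linearIndependent.2 hli, Submodule.span_le]
    rintro _ ⟨w, rfl⟩
    exact ⟨w, rfl⟩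
  obtain ⟨w, hw⟩ := hrange ▸ Submodule.mem_top (x := c)
  exact ⟨w, fun j => congrFun hw j⟩

/-- A form of `0 ≤ liminf_{t → 0⁺} f'(x + t h) h / t` that is meaningful without knowing that
the quotient is bounded. -/
def LowerSecondDerivNonneg (f : E → ℝ) (x h : E) : Prop :=
  ∀ c > 0, ∀ᶠ t in 𝓝[>] (0 : ℝ), -c ≤ fderiv ℝ f (x + t • h) h / t

theorem lowerSecondDerivNonneg_of_convex {f : E → ℝ} {Ω : Set E} (hconv : Convex ℝ Ω)
    (hΩ : ∀ y ∈ Ω, f y ≤ 0) {x h v : E} (hx : x ∈ Ω) (hfx : f x = 0) {V : Set E}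
    (hV : V ∈ 𝓝 x) (hf : ∀ y ∈ V, DifferentiableAt ℝ f y) {K : ℝ≥0}
    (hlip : LipschitzOnWith K (fderiv ℝ f) V) (hh : fderiv ℝ f x h = 0)
    (hv : fderiv ℝ f x v = 1)
    (hloc : ∀ A : ℝ, ∀ᶠ t in 𝓝[>] (0 : ℝ), ∀ w : E, ‖w‖ ≤ A * t ^ 2 →
      f (x + t • h + w) ≤ 0 → x + t • h + w ∈ Ω) :
    LowerSecondDerivNonneg f x h := by
  intro c hc
  set L : ℝ≥0 := K * ‖h‖₊ * ‖h‖₊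
  set A : ℝ := L + 1
  obtain ⟨C, hC, haff⟩ :=
    exists_eventually_abs_sub_sub_le hV hf hlip hv h (A := A) (by positivity)
  have hsmall : ∀ᶠ t in 𝓝 (0 : ℝ), C * t < 1 ∧ 48 * L * C * t < c ^ 2 :=
    ((Continuous.tendsto' (by fun_prop) 0 0 (by simp)).eventually_lt_const one_pos).and
      ((Continuous.tendsto' (by fun_prop) 0 0 (by simp)).eventually_lt_const (by positivity))
  filter_upwards [(eventually_add_smul_mem hV h).filter_mono nhdsWithin_le_nhds, haff,
    hloc (A * ‖v‖), hsmall.filter_mono nhdsWithin_le_nhds, self_mem_nhdsWithin]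
    with t hline hafft hloct ⟨hCt, hct⟩ (ht : 0 < t)
  have hu : ∀ σ ∈ Icc 0 t,
      HasDerivAt (fun σ : ℝ => f (x + σ • h)) (fderiv ℝ f (x + σ • h) h) σ :=
    fun σ hσ => hasDerivAt_comp_add_smul (hf _ (hline σ hσ))
  have hlipu : LipschitzOnWith L (fun σ => fderiv ℝ f (x + σ • h) h) (Icc 0 t) :=
    lipschitzOnWith_fderiv_comp_add_smul hlip hline
  have hu0 : f (x + (0 : ℝ) • h) = 0 := by simpa using hfx
  have hu'0 : fderiv ℝ f (x + (0 : ℝ) • h) h = 0 := by simpa using hh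
  have hut := abs_le_mul_sq_of_lipschitzOnWith_deriv hu hlipu hu0 hu'0 ⟨ht.le, le_rfl⟩
  have hs : |f (x + t • h) + C * t ^ 3| ≤ A * t ^ 2 := by
    have hCt3 : C * t ^ 3 ≤ t ^ 2 := by nlinarith [pow_pos ht 2]
    have htri := abs_add_le (f (x + t • h)) (C * t ^ 3)
    rw [abs_of_nonneg (by positivity : 0 ≤ C * t ^ 3)] at htri
    simp only [A]
    linarith
  have hmem : ∀ s : ℝ, |s| ≤ A * t ^ 2 → f (x + t • h + s • v) ≤ 0 →
      x + t • h + s • v ∈ Ω := fun s hs hfz => hloct (s • v) (by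
    rw [norm_smul, Real.norm_eq_abs]; nlinarith [norm_nonneg v]) hfz
  have hchord := le_chord_of_convex hconv hΩ hx ht.le hC hafft hs hmem
  rw [le_div_iff₀ ht]
  by_contra! hlt
  have hsq := sq_le_of_le_chord ht.le hu hlipu hu0 hu'0 hchord (by nlinarith)
  have h₁ := mul_self_lt_mul_self (by positivity : 0 ≤ c * t)
    (by linarith : c * t < -fderiv ℝ f (x + t • h) h)
  have h₂ : 48 * L * C * t * t ^ 2 < c ^ 2 * t ^ 2 := mul_lt_mul_of_pos_right hct (by positivity)
  linarith

theorem LowerSecondDerivNonneg.of_add_smul {f : E → ℝ} {x h w : E} {V : Set E}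
    (hV : V ∈ 𝓝 x) {K : ℝ≥0} (hlip : LipschitzOnWith K (fderiv ℝ f) V)
    (hw : fderiv ℝ f x w = 0) (hpert : ∀ ε : ℝ, 0 < ε → LowerSecondDerivNonneg f x (h + ε • w)) :
    LowerSecondDerivNonneg f x h := by
  intro c hc
  have hsmall : ∀ᶠ ε in 𝓝[>] (0 : ℝ), K * (ε * ‖w‖) * (2 * ‖h‖ + ε * ‖w‖) < c / 2 ∧ 0 < ε :=
    (((Continuous.tendsto' (by fun_prop) 0 0 (by simp)).eventually_lt_const
      (half_pos hc)).filter_mono nhdsWithin_le_nhds).and self_mem_nhdsWithin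
  obtain ⟨ε, hεc, hε⟩ := hsmall.exists
  set k := h + ε • w
  have hhk : ‖h - k‖ = ε * ‖w‖ := by
    rw [sub_add_cancel_left, norm_neg, norm_smul, Real.norm_of_nonneg hε.le]
  have hk : ‖k‖ ≤ ‖h‖ + ε * ‖w‖ := by
    rw [← Real.norm_of_nonneg hε.le, ← norm_smul]; exact norm_add_le _ _
  filter_upwards [hpert ε hε (c / 2) (half_pos hc), self_mem_nhdsWithin,
    (eventually_add_smul_mem hV h).filter_mono nhdsWithin_le_nhds,
    (eventually_add_smul_mem hV k).filter_mono nhdsWithin_le_nhds] with t htk (ht : 0 < t) hth hkt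
  have hdiff := norm_fderiv_comp_add_smul_sub_le hlip ht.le (mem_of_mem_nhds hV)
    (hth t ⟨ht.le, le_rfl⟩) (hkt t ⟨ht.le, le_rfl⟩) (by simp [k, hw])
  have hbound : K * t * ‖h - k‖ * (‖h‖ + ‖k‖) ≤ t * (c / 2) := by
    rw [hhk]
    calc (K : ℝ) * t * (ε * ‖w‖) * (‖h‖ + ‖k‖)
        ≤ t * (K * (ε * ‖w‖) * (2 * ‖h‖ + ε * ‖w‖)) := by
          rw [show (K : ℝ) * t * (ε * ‖w‖) * (‖h‖ + ‖k‖)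
            = t * (K * (ε * ‖w‖) * (‖h‖ + ‖k‖)) by ring]
          gcongr _ * (_ * ?_); linarith
      _ ≤ t * (c / 2) := by gcongr
  rw [le_div_iff₀ ht] at htk ⊢
  linarith [neg_le_of_abs_le (Real.norm_eq_abs _ ▸ hdiff)]

theorem LowerSecondDerivNonneg.zero_le_liminf {f : E → ℝ} {x h : E} {V : Set E}
    (hV : V ∈ 𝓝 x) {K : ℝ≥0} (hlip : LipschitzOnWith K (fderiv ℝ f) V)
    (hh : fderiv ℝ f x h = 0) (H : LowerSecondDerivNonneg f x h) :
    0 ≤ liminf (fun t : ℝ => fderiv ℝ f (x + t • h) h / t) (𝓝[>] 0) := by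
  have hbdd : ∀ᶠ t in 𝓝[>] (0 : ℝ), fderiv ℝ f (x + t • h) h / t ≤ K * ‖h‖ * ‖h‖ := by
    filter_upwards [(eventually_add_smul_mem hV h).filter_mono nhdsWithin_le_nhds,
      self_mem_nhdsWithin] with t hth (ht : 0 < t)
    have := norm_fderiv_comp_add_smul_sub_le (k := 0) hlip ht.le (mem_of_mem_nhds hV)
      (hth t ⟨ht.le, le_rfl⟩) (by simpa using mem_of_mem_nhds hV) (by simp [hh])
    simp only [smul_zero, add_zero, map_zero, sub_zero, norm_zero, Real.norm_eq_abs] at this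
    rw [div_le_iff₀ ht]
    linarith [le_abs_self (fderiv ℝ f (x + t • h) h)]
  have hcobdd := (isBoundedUnder_of_eventually_le hbdd).isCoboundedUnder_ge
  refine le_of_forall_pos_le_add fun c hc => ?_
  linarith [le_liminf_of_le hcobdd (H c hc)]

end NormedSpace

theorem secondOrder_condition_of_convex_general {n m : ℕ}
    (U : Set (EuclideanSpace ℝ (Fin n))) (hU : IsOpen U)
    (g : Fin m → EuclideanSpace ℝ (Fin n) → ℝ)
    (hgc : ∀ i, ContinuousOn (g i) U)
    (hgs : ∀ i, C11SubmersionOnZeroSet U (g i))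
    (Ω : Set (EuclideanSpace ℝ (Fin n)))
    (hΩ : Ω = {x | x ∈ U ∧ ∀ i, g i x ≤ 0})
    (hcl : IsClosed Ω)
    (hconv : Convex ℝ Ω)
    (x : EuclideanSpace ℝ (Fin n)) (hx : x ∈ frontier Ω)
    (hli : LinearIndependent ℝ (fun i : {i : Fin m // g i x = 0} => fderiv ℝ (g i.1) x)) :
    ∀ i, g i x = 0 →
      ∀ h : EuclideanSpace ℝ (Fin n),
        (∀ j, g j x = 0 → fderiv ℝ (g j) x h ≤ 0) → fderiv ℝ (g i) x h = 0 →
        0 ≤ liminf (fun t : ℝ => fderiv ℝ (g i) (x + t • h) h / t) (𝓝[>] (0:ℝ)) := by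
  intro i hi h hC hker
  have hxΩ : x ∈ Ω := hcl.frontier_subset hx
  subst hΩ
  obtain ⟨⟨V, hVo, hxV, -, hdV, K, hlip⟩, -⟩ := hgs i x hxΩ.1 hi
  have hV := hVo.mem_nhds hxV
  have hdiff : ∀ j, g j x = 0 → DifferentiableAt ℝ (g j) x := fun j hj => by
    obtain ⟨⟨V', -, hxV', -, hdV', -⟩, -⟩ := hgs j x hxΩ.1 hj
    exact hdV' x hxV'
  obtain ⟨v, hv⟩ := exists_forall_apply_eq_of_linearIndependent hli
    fun j => if j.1 = i then 1 else 0
  obtain ⟨w, hw⟩ := exists_forall_apply_eq_of_linearIndependent hli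
    fun j => if j.1 = i then 0 else -1
  have hwi : fderiv ℝ (g i) x w = 0 := by simpa using hw ⟨i, hi⟩
  have hwj : ∀ j ≠ i, g j x = 0 → fderiv ℝ (g j) x w = -1 := fun j hji hj => by
    simpa [hji] using hw ⟨j, hj⟩
  refine (LowerSecondDerivNonneg.of_add_smul hV hlip hwi fun ε hε => ?_).zero_le_liminf
    hV hlip hker
  refine lowerSecondDerivNonneg_of_convex hconv (fun y hy => hy.2 i) hxΩ hi hV hdV hlip
    (by simp [hker, hwi]) (by simpa using hv ⟨i, hi⟩)
    (eventually_mem_of_fderiv_neg hU hgc hxΩ.1 hxΩ.2 i fun j hji hj => ⟨hdiff j hj, ?_⟩)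
  rw [map_add, map_smul, hwj j hji hj, smul_eq_mul]
  linarith [hC j hj]

/-- Theorem 3 (ii): second-order necessary condition at boundary points of a convex
sublevel set where the active derivatives are linearly independent. -/
theorem secondOrder_condition_of_convex {n m : ℕ} (hm : 0 < m)
    (U : Set (EuclideanSpace ℝ (Fin n))) (hU : IsOpen U)
    (g : Fin m → EuclideanSpace ℝ (Fin n) → ℝ)
    (hgc : ∀ i, ContinuousOn (g i) U)
    (hgs : ∀ i, C11SubmersionOnZeroSet U (g i))
    (Ω : Set (EuclideanSpace ℝ (Fin n)))
    (hΩ : Ω = {x | x ∈ U ∧ ∀ i, g i x ≤ 0})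
    (hcl : IsClosed Ω) (hconn : IsPreconnected Ω)
    (hconv : Convex ℝ Ω)
    (x : EuclideanSpace ℝ (Fin n)) (hx : x ∈ frontier Ω)
    (hli : LinearIndependent ℝ (fun i : {i : Fin m // g i x = 0} => fderiv ℝ (g i.1) x)) :
    ∀ i, g i x = 0 →
      ∀ h : EuclideanSpace ℝ (Fin n),
        (∀ j, g j x = 0 → fderiv ℝ (g j) x h ≤ 0) → fderiv ℝ (g i) x h = 0 →
        0 ≤ liminf (fun t : ℝ => fderiv ℝ (g i) (x + t • h) h / t) (𝓝[>] (0:ℝ)) :=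
  secondOrder_condition_of_convex_general U hU g hgc hgs Ω hΩ hcl hconv x hx hli
end

section
/- Let P be a symmetric positive definite n×n real matrix with maximum eigenvalue μ₊(P) and minimum eigenvalue μ₋(P), and let Ω = {x ∈ ℝⁿ | ⟨x, Px⟩ ≤ 1} be the associated ellipsoid. Then for r > 0, the set Ω is r-convex if and only if r ≥ μ₊(P)^{1/2} / μ₋(P). -/
/-!
If `√M / m ≤ r`, where `m ≤ M` bound the eigenvalues of `T`, then at every boundary point `p` of
the ellipsoid `{x | ⟪x, T x⟫ ≤ 1}` the ball of radius `r` centred at distance `r` from `p` along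
the inner normal `-T p` contains the ellipsoid: since `‖T p‖ ≤ √M ≤ r m`, the ball is nowhere
more curved than the ellipsoid. So the ellipsoid is an intersection of balls of radius `r`, and
each of them contains every spindle of two points of the ellipsoid.

Conversely, let `r < √M / m`, with unit eigenvectors `e` for `M` and `f` for `m`. If
`r < 1 / √m`, no ball of radius `r` contains both `± f / √m`, so their spindle is everything.
Otherwise two boundary points `h e ± s f` near the vertex `e / √M` have a spindle whose tip lies
about `s² / (2 r)` beyond their midpoint, while the ellipsoid only extends about `m s² / (2 √M)`
beyond it.
-/

open Metric Set
open scoped RealInnerProductSpace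

section Spindle

variable {X : Type*} [PseudoMetricSpace X]

def spindle (r : ℝ) (x y : X) : Set X :=
  {z | ∀ c, x ∈ closedBall c r → y ∈ closedBall c r → z ∈ closedBall c r}

theorem spindle_eq_univ_of_two_mul_lt_dist {r : ℝ} {x y : X} (h : 2 * r < dist x y) :
    spindle r x y = univ := by
  refine eq_univ_of_forall fun z c hx hy => absurd h (not_lt.2 ?_)
  linarith [dist_triangle_right x y c, mem_closedBall.1 hx, mem_closedBall.1 hy]

theorem spindle_subset_of_forall_notMem {r : ℝ} {s : Set X} {x y : X} (hx : x ∈ s) (hy : y ∈ s)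
    (h : ∀ z ∉ s, ∃ c, s ⊆ closedBall c r ∧ z ∉ closedBall c r) : spindle r x y ⊆ s := by
  intro z hz
  by_contra hzs
  obtain ⟨c, hsc, hzc⟩ := h z hzs
  exact hzc (hz c (hsc hx) (hsc hy))

theorem rConvex_iff_forall_spindle_subset {n : ℕ} {r : ℝ} {Ω : Set (EuclideanSpace ℝ (Fin n))} :
    RConvex r Ω ↔ ∀ x ∈ Ω, ∀ y ∈ Ω, spindle r x y ⊆ Ω :=
  Iff.rfl

end Spindle

section InnerProductSpace

variable {E : Type*} [NormedAddCommGroup E] [InnerProductSpace ℝ E]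

theorem add_smul_mem_spindle_add_sub {r : ℝ} {m v e : E} (he : ‖e‖ = 1) :
    m + (r - √(r ^ 2 - ‖v‖ ^ 2)) • e ∈ spindle r (m + v) (m - v) := by
  intro c hx hy
  rw [mem_closedBall, dist_eq_norm] at hx hy ⊢
  have hr : 0 ≤ r := (norm_nonneg _).trans hx
  have hmc : ‖m - c‖ ≤ √(r ^ 2 - ‖v‖ ^ 2) := by
    refine Real.le_sqrt_of_sq_le ?_
    have := parallelogram_law_with_norm ℝ (m - c) v
    rw [sub_add_eq_add_sub, sub_right_comm] at this
    nlinarith [pow_le_pow_left₀ (norm_nonneg _) hx 2, pow_le_pow_left₀ (norm_nonneg _) hy 2]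
  have hρ : √(r ^ 2 - ‖v‖ ^ 2) ≤ r :=
    Real.sqrt_le_iff.2 ⟨hr, by nlinarith [sq_nonneg ‖v‖]⟩
  calc ‖m + (r - √(r ^ 2 - ‖v‖ ^ 2)) • e - c‖
      = ‖(m - c) + (r - √(r ^ 2 - ‖v‖ ^ 2)) • e‖ := by rw [add_sub_right_comm]
    _ ≤ ‖m - c‖ + (r - √(r ^ 2 - ‖v‖ ^ 2)) := by
        grw [norm_add_le, norm_smul, he, mul_one, Real.norm_of_nonneg (sub_nonneg.2 hρ)]
    _ ≤ r := by linarith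

theorem norm_add_div_norm_smul_sq (u : E) {g : E} (hg : g ≠ 0) (r : ℝ) :
    ‖u + (r / ‖g‖) • g‖ ^ 2 = ‖u‖ ^ 2 + 2 * (r / ‖g‖) * ⟪u, g⟫ + r ^ 2 := by
  rw [norm_add_sq_real, real_inner_smul_right, norm_smul, Real.norm_eq_abs, abs_div, abs_norm,
    div_mul_cancel₀ _ (norm_ne_zero_iff.2 hg), sq_abs]
  ring

theorem mem_closedBall_sub_smul_of_norm_mul_sq_le {p g w : E} {r : ℝ} (hr : 0 ≤ r) (hg : g ≠ 0)
    (h : ‖g‖ * ‖w - p‖ ^ 2 ≤ -(2 * r * ⟪w - p, g⟫)) :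
    w ∈ closedBall (p - (r / ‖g‖) • g) r := by
  have hN : 0 < ‖g‖ := norm_pos_iff.2 hg
  rw [mem_closedBall, dist_eq_norm, sub_sub_eq_add_sub, add_sub_right_comm]
  refine (pow_le_pow_iff_left₀ (norm_nonneg _) hr two_ne_zero).1 ?_
  rw [norm_add_div_norm_smul_sq _ hg, div_eq_inv_mul]
  have := mul_le_mul_of_nonneg_left h (inv_nonneg.2 hN.le)
  rw [← mul_assoc, inv_mul_cancel₀ hN.ne', one_mul] at this
  linarith

theorem smul_notMem_closedBall_sub_smul {p g : E} {r t : ℝ} (hr : 0 < r) (hpg : 0 < ⟪p, g⟫)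
    (ht : 1 < t) : t • p ∉ closedBall (p - (r / ‖g‖) • g) r := by
  have hg : g ≠ 0 := by rintro rfl; simp at hpg
  rw [mem_closedBall, dist_eq_norm, not_le, sub_sub_eq_add_sub, add_sub_right_comm,
    show t • p - p = (t - 1) • p by rw [sub_smul, one_smul]]
  refine (pow_lt_pow_iff_left₀ hr.le (norm_nonneg _) two_ne_zero).1 ?_
  rw [norm_add_div_norm_smul_sq _ hg, real_inner_smul_left]
  have : 0 < 2 * (r / ‖g‖) * ((t - 1) * ⟪p, g⟫) := by
    have := sub_pos.2 ht
    positivity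
  linarith [sq_nonneg ‖(t - 1) • p‖]

def ellipsoid (T : E →ₗ[ℝ] E) : Set E :=
  {x | ⟪x, T x⟫ ≤ 1}

variable {T : E →ₗ[ℝ] E}

@[simp]
theorem mem_ellipsoid {x : E} : x ∈ ellipsoid T ↔ ⟪x, T x⟫ ≤ 1 := Iff.rfl

theorem ellipsoid_subset_closedBall {m r : ℝ} {p : E} (hT : T.IsSymmetric)
    (hm : ∀ x, m * ‖x‖ ^ 2 ≤ ⟪x, T x⟫) (hr : 0 ≤ r) (hp : ⟪p, T p⟫ = 1) (hpr : ‖T p‖ ≤ r * m) :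
    ellipsoid T ⊆ closedBall (p - (r / ‖T p‖) • T p) r := by
  intro w hw
  have hTp : T p ≠ 0 := by rintro h; simp [h] at hp
  refine mem_closedBall_sub_smul_of_norm_mul_sq_le hr hTp ?_
  have hwp : ⟪w - p, T (w - p)⟫ = ⟪w, T w⟫ - 1 - 2 * ⟪w - p, T p⟫ := by
    simp only [map_sub, inner_sub_left, inner_sub_right, ← hT p w, real_inner_comm (T p) w, hp]
    ring
  have hQ : m * ‖w - p‖ ^ 2 ≤ -(2 * ⟪w - p, T p⟫) := by
    linarith [hm (w - p), show ⟪w, T w⟫ ≤ 1 from hw]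
  nlinarith [mul_le_mul_of_nonneg_right hpr (sq_nonneg ‖w - p‖)]

theorem spindle_subset_ellipsoid {m M r : ℝ} {x y : E} (hT : T.IsSymmetric)
    (hm : ∀ x, m * ‖x‖ ^ 2 ≤ ⟪x, T x⟫) (hM : ∀ x, ‖T x‖ ^ 2 ≤ M * ⟪x, T x⟫) (hr : 0 < r)
    (hMr : √M ≤ r * m) (hx : x ∈ ellipsoid T) (hy : y ∈ ellipsoid T) :
    spindle r x y ⊆ ellipsoid T := by
  refine spindle_subset_of_forall_notMem hx hy fun z hz => ?_
  have hz : 1 < ⟪z, T z⟫ := not_le.1 hz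
  set t := √⟪z, T z⟫
  have ht : 1 < t := Real.lt_sqrt_of_sq_lt (by simpa using hz)
  have ht2 : t ^ 2 = ⟪z, T z⟫ := Real.sq_sqrt (by linarith)
  set p := t⁻¹ • z
  have hp : ⟪p, T p⟫ = 1 := by
    rw [map_smul, real_inner_smul_left, real_inner_smul_right, ← ht2]
    field_simp
  have hpM : ‖T p‖ ≤ √M := Real.le_sqrt_of_sq_le (by simpa [hp] using hM p)
  refine ⟨_, ellipsoid_subset_closedBall hT hm hr.le hp (hpM.trans hMr), ?_⟩
  have hzp : z = t • p := by rw [smul_inv_smul₀ (by positivity)]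
  rw [hzp]
  exact smul_notMem_closedBall_sub_smul hr (by rw [hp]; exact one_pos) ht

section Eigenbasis

variable {ι : Type*} [Fintype ι] {b : OrthonormalBasis ι ℝ E} {μ : ι → ℝ}

theorem inner_basis_apply (hT : T.IsSymmetric) (hb : ∀ i, T (b i) = μ i • b i) (i : ι) (x : E) :
    ⟪b i, T x⟫ = μ i * ⟪b i, x⟫ := by
  rw [← hT, hb, real_inner_smul_left]

theorem inner_apply_self_eq_sum (hT : T.IsSymmetric) (hb : ∀ i, T (b i) = μ i • b i) (x : E) :
    ⟪x, T x⟫ = ∑ i, μ i * ⟪b i, x⟫ ^ 2 := by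
  rw [← b.sum_inner_mul_inner]
  simp only [inner_basis_apply hT hb, real_inner_comm x]
  exact Finset.sum_congr rfl fun i _ => by ring

theorem norm_apply_sq_eq_sum (hT : T.IsSymmetric) (hb : ∀ i, T (b i) = μ i • b i) (x : E) :
    ‖T x‖ ^ 2 = ∑ i, (μ i * ⟪b i, x⟫) ^ 2 := by
  simp only [← b.sum_sq_inner_right, inner_basis_apply hT hb]

theorem mul_norm_sq_le_inner_apply_self {m : ℝ} (hT : T.IsSymmetric)
    (hb : ∀ i, T (b i) = μ i • b i) (hm : ∀ i, m ≤ μ i) (x : E) :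
    m * ‖x‖ ^ 2 ≤ ⟪x, T x⟫ := by
  rw [inner_apply_self_eq_sum hT hb, ← b.sum_sq_inner_right, Finset.mul_sum]
  gcongr with i
  exact hm i

theorem norm_apply_sq_le_mul_inner_apply_self {M : ℝ} (hT : T.IsSymmetric)
    (hb : ∀ i, T (b i) = μ i • b i) (hμ : ∀ i, 0 ≤ μ i) (hM : ∀ i, μ i ≤ M) (x : E) :
    ‖T x‖ ^ 2 ≤ M * ⟪x, T x⟫ := by
  rw [norm_apply_sq_eq_sum hT hb, inner_apply_self_eq_sum hT hb, Finset.mul_sum]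
  gcongr with i
  calc (μ i * ⟪b i, x⟫) ^ 2 = μ i * (μ i * ⟪b i, x⟫ ^ 2) := by ring
    _ ≤ M * (μ i * ⟪b i, x⟫ ^ 2) := by have := hμ i; gcongr; exact hM i

end Eigenbasis

theorem inner_smul_apply_smul_self {e : E} {M : ℝ} (he : ‖e‖ = 1) (hTe : T e = M • e) (u : ℝ) :
    ⟪u • e, T (u • e)⟫ = M * u ^ 2 := by
  rw [map_smul, hTe, real_inner_smul_left, real_inner_smul_right, real_inner_smul_right,
    real_inner_self_eq_norm_sq, he]
  ring

theorem inner_smul_add_smul_apply_self {e f : E} {M m : ℝ} (he : ‖e‖ = 1) (hf : ‖f‖ = 1)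
    (hef : ⟪e, f⟫ = 0) (hTe : T e = M • e) (hTf : T f = m • f) (u v : ℝ) :
    ⟪u • e + v • f, T (u • e + v • f)⟫ = M * u ^ 2 + m * v ^ 2 := by
  have hfe : ⟪f, e⟫ = 0 := by rw [real_inner_comm, hef]
  simp only [map_add, map_smul, hTe, hTf, inner_add_left, inner_add_right, real_inner_smul_left,
    real_inner_smul_right, real_inner_self_eq_norm_sq, he, hf, hef, hfe]
  ring

theorem exists_spindle_not_subset_ellipsoid_of_mul_sqrt_lt_one {f : E} {m r : ℝ}
    (hf : ‖f‖ = 1) (hTf : T f = m • f) (hm : 0 < m) (hr : r * √m < 1) :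
    ∃ x ∈ ellipsoid T, ∃ y ∈ ellipsoid T, ¬spindle r x y ⊆ ellipsoid T := by
  have hQ (u : ℝ) : ⟪u • f, T (u • f)⟫ = (u * √m) ^ 2 := by
    rw [inner_smul_apply_smul_self hf hTf, mul_pow, Real.sq_sqrt hm.le, mul_comm]
  set a := (√m)⁻¹
  have ha : a * √m = 1 := inv_mul_cancel₀ (by positivity)
  refine ⟨a • f, ?_, (-a) • f, ?_, fun h => ?_⟩
  · rw [mem_ellipsoid, hQ, ha, one_pow]
  · rw [mem_ellipsoid, hQ, neg_mul, neg_sq, ha, one_pow]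
  have hdist : 2 * r < dist (a • f) ((-a) • f) := by
    rw [dist_eq_norm, ← sub_smul, norm_smul, hf, mul_one, sub_neg_eq_add, ← two_mul,
      Real.norm_of_nonneg (by positivity)]
    have : r < a := by nlinarith [Real.sqrt_pos.2 hm]
    linarith
  have hz := h (spindle_eq_univ_of_two_mul_lt_dist hdist ▸ mem_univ ((2 * a) • f))
  rw [mem_ellipsoid, hQ, mul_assoc, ha] at hz
  norm_num at hz

theorem exists_spindle_not_subset_ellipsoid_of_mul_lt_sqrt {e f : E} {M m r : ℝ}
    (he : ‖e‖ = 1) (hf : ‖f‖ = 1) (hef : ⟪e, f⟫ = 0) (hTe : T e = M • e) (hTf : T f = m • f)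
    (hm : 0 < m) (hr : 1 ≤ r * √m) (hrM : r * m < √M) :
    ∃ x ∈ ellipsoid T, ∃ y ∈ ellipsoid T, ¬spindle r x y ⊆ ellipsoid T := by
  have hr0 : 0 < r := by
    by_contra! h
    nlinarith [Real.sqrt_nonneg m]
  have hsM : 0 < √M := (mul_pos hr0 hm).trans hrM
  have hM : √M ^ 2 = M := Real.sq_sqrt (Real.sqrt_pos.1 hsM).le
  set θ := r * m / √M
  have hθ : r * m = θ * √M := (div_mul_cancel₀ _ hsM.ne').symm
  have hθ0 : 0 < θ := by positivity
  have hθ1 : θ < 1 := (div_lt_one hsM).2 hrM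
  set s := √((1 - θ ^ 2) / m)
  have hs : m * s ^ 2 = 1 - θ ^ 2 := by
    rw [Real.sq_sqrt (div_nonneg (by nlinarith) hm.le)]
    field_simp
  have hsr : s ^ 2 ≤ r ^ 2 := by
    have : 1 ≤ m * r ^ 2 := by nlinarith [Real.sq_sqrt hm.le]
    nlinarith
  set h := θ / √M
  have hh : √M * h = θ := mul_div_cancel₀ θ hsM.ne'
  have hQ (v : ℝ) : ⟪h • e + v • f, T (h • e + v • f)⟫ = θ ^ 2 + m * v ^ 2 := by
    rw [inner_smul_add_smul_apply_self he hf hef hTe hTf, ← hM]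
    linear_combination (√M * h + θ) * hh
  refine ⟨h • e + s • f, ?_, h • e + (-s) • f, ?_, fun hsub => ?_⟩
  · rw [mem_ellipsoid, hQ, hs]; linarith
  · rw [mem_ellipsoid, hQ, neg_sq, hs]; linarith
  have hz := hsub (by
    simpa only [neg_smul, ← sub_eq_add_neg] using
      add_smul_mem_spindle_add_sub (r := r) (m := h • e) (v := s • f) he)
  rw [norm_smul, hf, mul_one, Real.norm_of_nonneg (Real.sqrt_nonneg _), ← add_smul,
    mem_ellipsoid, inner_smul_apply_smul_self he hTe, ← hM, ← mul_pow] at hz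
  set ρ := √(r ^ 2 - s ^ 2)
  have hρ : ρ ^ 2 = r ^ 2 - s ^ 2 := Real.sq_sqrt (by linarith)
  have hρr : ρ ≤ r := Real.sqrt_le_iff.2 ⟨hr0.le, by linarith [sq_nonneg s]⟩
  have hδ : s ^ 2 ≤ 2 * r * (r - ρ) := by nlinarith [Real.sqrt_nonneg (r ^ 2 - s ^ 2)]
  -- The tip `(h + (r - ρ)) • e` leaves the ellipsoid because `1 - θ ^ 2 > 2 * θ * (1 - θ)`.
  have hθδ : 1 - θ ^ 2 ≤ 2 * θ * (√M * (r - ρ)) :=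
    calc 1 - θ ^ 2 = m * s ^ 2 := hs.symm
      _ ≤ m * (2 * r * (r - ρ)) := by gcongr
      _ = 2 * θ * (√M * (r - ρ)) := by linear_combination 2 * (r - ρ) * hθ
  have hδθ : 1 - θ < √M * (r - ρ) := by nlinarith [sq_pos_of_pos (sub_pos.2 hθ1)]
  have hz' : 1 < √M * (h + (r - ρ)) := by rw [mul_add, hh]; linarith
  nlinarith

theorem forall_spindle_subset_ellipsoid_iff {ι : Type*} [Fintype ι] {b : OrthonormalBasis ι ℝ E}
    {μ : ι → ℝ} {i j : ι} {r : ℝ} (hT : T.IsSymmetric) (hb : ∀ k, T (b k) = μ k • b k)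
    (hi : ∀ k, μ k ≤ μ i) (hj : ∀ k, μ j ≤ μ k) (hμj : 0 < μ j) :
    (∀ x ∈ ellipsoid T, ∀ y ∈ ellipsoid T, spindle r x y ⊆ ellipsoid T) ↔ √(μ i) / μ j ≤ r := by
  have hμi : 0 < √(μ i) := Real.sqrt_pos.2 (hμj.trans_le (hj i))
  constructor
  · intro h
    by_contra! hr
    rw [lt_div_iff₀ hμj] at hr
    have hneg : ∃ x ∈ ellipsoid T, ∃ y ∈ ellipsoid T, ¬spindle r x y ⊆ ellipsoid T := by
      rcases lt_or_ge (r * √(μ j)) 1 with h1 | h1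
      · exact exists_spindle_not_subset_ellipsoid_of_mul_sqrt_lt_one (b.orthonormal.1 j) (hb j)
          hμj h1
      · have hij : i ≠ j := by
          rintro rfl
          nlinarith [Real.mul_self_sqrt hμj.le]
        exact exists_spindle_not_subset_ellipsoid_of_mul_lt_sqrt (b.orthonormal.1 i)
          (b.orthonormal.1 j) (b.orthonormal.2 hij) (hb i) (hb j) hμj h1 hr
    obtain ⟨x, hx, y, hy, hxy⟩ := hneg
    exact hxy (h x hx y hy)
  · intro h x hx y hy
    exact spindle_subset_ellipsoid hT (mul_norm_sq_le_inner_apply_self hT hb hj)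
      (norm_apply_sq_le_mul_inner_apply_self hT hb (fun k => hμj.le.trans (hj k)) hi)
      ((div_pos hμi hμj).trans_le h) ((div_le_iff₀ hμj).1 h) hx hy

end InnerProductSpace

theorem ellipsoid_rConvex_iff_general {n : ℕ} (hn : 0 < n)
    (P : Matrix (Fin n) (Fin n) ℝ) (hP : P.PosDef)
    (Ω : Set (EuclideanSpace ℝ (Fin n)))
    (hΩ : Ω = {x : EuclideanSpace ℝ (Fin n) | ∑ i, x i * P.mulVec x i ≤ 1})
    (r : ℝ) :
    RConvex r Ω ↔ Real.sqrt (⨆ i, hP.1.eigenvalues i) / (⨅ i, hP.1.eigenvalues i) ≤ r := by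
  have : Nonempty (Fin n) := ⟨⟨0, hn⟩⟩
  obtain ⟨i, hi⟩ := exists_eq_ciSup_of_finite (f := hP.1.eigenvalues)
  obtain ⟨j, hj⟩ := exists_eq_ciInf_of_finite (f := hP.1.eigenvalues)
  have hΩT : Ω = ellipsoid (Matrix.toEuclideanLin P) := by
    rw [hΩ]
    ext x
    simp [PiLp.inner_apply, mul_comm]
  rw [rConvex_iff_forall_spindle_subset, ← hi, ← hj, hΩT]
  refine forall_spindle_subset_ellipsoid_iff (b := hP.1.eigenvectorBasis)
    (Matrix.isSymmetric_toEuclideanLin_iff.2 hP.1) (fun k => ?_)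
    (fun k => hi ▸ le_ciSup (Finite.bddAbove_range _) k)
    (fun k => hj ▸ ciInf_le (Finite.bddBelow_range _) k) (hP.eigenvalues_pos j)
  ext1
  simp [Matrix.toLpLin_apply, hP.1.mulVec_eigenvectorBasis]

/-- The ellipsoid `{x | ⟨x, P x⟩ ≤ 1}` associated to a symmetric positive definite matrix `P`
is `r`-convex if and only if `r ≥ μ₊(P)^{1/2} / μ₋(P)`, where `μ₊(P)` and `μ₋(P)` are the
largest and smallest eigenvalues of `P`. -/
theorem ellipsoid_rConvex_iff {n : ℕ} (hn : 0 < n)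
    (P : Matrix (Fin n) (Fin n) ℝ) (hsymm : P.IsSymm) (hP : P.PosDef)
    (Ω : Set (EuclideanSpace ℝ (Fin n)))
    (hΩ : Ω = {x : EuclideanSpace ℝ (Fin n) | ∑ i, x i * P.mulVec x i ≤ 1})
    (r : ℝ) (hr : 0 < r) :
    RConvex r Ω ↔ Real.sqrt (⨆ i, hP.1.eigenvalues i) / (⨅ i, hP.1.eigenvalues i) ≤ r :=
  ellipsoid_rConvex_iff_general hn P hP Ω hΩ r
end

section
/- Let f : ℝⁿ → ℝ be a nonnegative function of class C^{1,1}, let L > 0 be a Lipschitz constant for the derivative f', and let σ > 0 be such that f(x + h) ≥ f(x) + f'(x)h + (σ/2)‖h‖² for all x, h ∈ ℝⁿ. Then for every ω > 0 and every r ≥ σ⁻¹·√(2Lω), the sublevel set Ω_ω = {x ∈ ℝⁿ | f(x) ≤ ω} is r-convex. -/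
open Filter Metric Set
open scoped Topology RealInnerProductSpace NNReal

/-!
Project a point `z` outside `Ω = {f ≤ ω}` onto the closed convex set `Ω`; the projection `p`
satisfies `f p = ω`. Strong convexity confines `Ω` to the region
`⟪∇f p, w - p⟫ ≤ -σ/2 ‖w - p‖²`, while the descent lemma and `f ≥ 0` give
`‖∇f p‖² ≤ 2Lω ≤ (σr)²`; hence the ball of radius `r` through `p` with inner normal `-∇f p`
contains `Ω`. The descent step `p - L⁻¹ ∇f p` stays in `Ω`, so `⟪z - p, ∇f p⟫ ≥ 0` and `z` lies
outside that ball.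
-/

open scoped Gradient

section

variable {E : Type*} [NormedAddCommGroup E] [NormedSpace ℝ E] {f : E → ℝ}

theorem convexOn_univ_of_add_fderiv_le (hf : ∀ x h, f x + fderiv ℝ f x h ≤ f (x + h)) :
    ConvexOn ℝ univ f := by
  refine ⟨convex_univ, fun a _ b _ s t hs ht hst => ?_⟩
  obtain rfl : t = 1 - s := by linarith
  set z := s • a + (1 - s) • b
  have ha := hf z (a - z)
  have hb := hf z (b - z)
  rw [add_sub_cancel] at ha hb
  have hdir : s * fderiv ℝ f z (a - z) + (1 - s) * fderiv ℝ f z (b - z) = 0 := by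
    have hzero : s • (a - z) + (1 - s) • (b - z) = 0 := by simp only [z]; module
    simpa only [map_add, map_smul, smul_eq_mul, map_zero] using congrArg (fderiv ℝ f z) hzero
  simp only [smul_eq_mul]
  nlinarith [mul_le_mul_of_nonneg_left ha hs, mul_le_mul_of_nonneg_left hb ht]

theorem image_add_le_of_lipschitzWith_fderiv {K : ℝ≥0} (hf : Differentiable ℝ f)
    (hlip : LipschitzWith K (fderiv ℝ f)) (x h : E) :
    f (x + h) ≤ f x + fderiv ℝ f x h + K / 2 * ‖h‖ ^ 2 := by
  have hline (t : ℝ) :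
      HasDerivAt (fun s : ℝ => f (x + s • h)) (fderiv ℝ f (x + t • h) h) t := by
    have : HasDerivAt (fun s : ℝ => x + s • h) h t := by
      simpa using ((hasDerivAt_id t).smul_const h).const_add x
    exact (hf _).hasFDerivAt.comp_hasDerivAt t this
  have hquad (t : ℝ) :
      HasDerivAt (fun s : ℝ => f x + s * fderiv ℝ f x h + K / 2 * ‖h‖ ^ 2 * s ^ 2)
        (fderiv ℝ f x h + K * ‖h‖ ^ 2 * t) t := by
    refine ((((hasDerivAt_id t).mul_const (fderiv ℝ f x h)).const_add (f x)).add
      ((hasDerivAt_pow 2 t).const_mul (K / 2 * ‖h‖ ^ 2))).congr_deriv ?_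
    norm_num; ring
  have hslope (t : ℝ) (ht : 0 ≤ t) :
      fderiv ℝ f (x + t • h) h ≤ fderiv ℝ f x h + K * ‖h‖ ^ 2 * t :=
    calc fderiv ℝ f (x + t • h) h
        = fderiv ℝ f x h + (fderiv ℝ f (x + t • h) - fderiv ℝ f x) h := by simp
      _ ≤ fderiv ℝ f x h + ‖fderiv ℝ f (x + t • h) - fderiv ℝ f x‖ * ‖h‖ := by
        gcongr; exact (Real.le_norm_self _).trans (ContinuousLinearMap.le_opNorm _ _)
      _ ≤ fderiv ℝ f x h + K * ‖t • h‖ * ‖h‖ := by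
        gcongr; simpa [dist_eq_norm] using hlip.dist_le_mul (x + t • h) x
      _ = fderiv ℝ f x h + K * ‖h‖ ^ 2 * t := by
        rw [norm_smul, Real.norm_of_nonneg ht]; ring
  simpa using image_le_of_deriv_right_le_deriv_boundary
    (fun t _ => (hline t).continuousAt.continuousWithinAt) (fun t _ => (hline t).hasDerivWithinAt)
    (by simp) (fun t _ => (hquad t).continuousAt.continuousWithinAt)
    (fun t _ => (hquad t).hasDerivWithinAt) (fun t ht => hslope t ht.1)
    (right_mem_Icc.2 zero_le_one)

end

section

variable {E : Type*} [NormedAddCommGroup E] [InnerProductSpace ℝ E]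

theorem eq_of_mem_interior_of_forall_inner_sub_nonpos {s : Set E} {p z : E} (hp : p ∈ interior s)
    (h : ∀ w ∈ s, ⟪z - p, w - p⟫ ≤ 0) : z = p := by
  have hlim : Tendsto (fun t : ℝ => p + t • (z - p)) (𝓝[>] 0) (𝓝 p) := by
    have hcont : Continuous fun t : ℝ => p + t • (z - p) := by fun_prop
    simpa using (hcont.tendsto 0).mono_left nhdsWithin_le_nhds
  obtain ⟨t, hts, ht⟩ :=
    ((hlim.eventually (mem_interior_iff_mem_nhds.1 hp)).and self_mem_nhdsWithin).exists
  have hle := h _ hts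
  rw [add_sub_cancel_left, real_inner_smul_right, real_inner_self_eq_norm_sq] at hle
  have hsq : ‖z - p‖ ^ 2 = 0 := le_antisymm (by nlinarith) (sq_nonneg _)
  simpa [sub_eq_zero] using hsq

theorem mem_closedBall_sub_smul_iff {p ν w : E} {r : ℝ} (hν : ‖ν‖ = 1) (hr : 0 ≤ r) :
    w ∈ closedBall (p - r • ν) r ↔ ‖w - p‖ ^ 2 + 2 * r * ⟪w - p, ν⟫ ≤ 0 := by
  have hsq : ‖w - (p - r • ν)‖ ^ 2 = ‖w - p‖ ^ 2 + 2 * r * ⟪w - p, ν⟫ + r ^ 2 := by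
    rw [show w - (p - r • ν) = (w - p) + r • ν by abel, norm_add_sq_real,
      real_inner_smul_right, norm_smul, hν, Real.norm_of_nonneg hr]
    ring
  rw [mem_closedBall, dist_eq_norm, ← sq_le_sq₀ (norm_nonneg _) hr, hsq]
  constructor <;> intro <;> linarith

theorem exists_closedBall_superset_notMem {s : Set E} {p z G : E} {σ r : ℝ} (hσ : 0 < σ)
    (hG : ‖G‖ ≤ σ * r) (hzp : z ≠ p) (hzG : 0 ≤ ⟪z - p, G⟫)
    (hs : ∀ w ∈ s, ⟪G, w - p⟫ ≤ -(σ / 2 * ‖w - p‖ ^ 2)) :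
    ∃ c, s ⊆ closedBall c r ∧ z ∉ closedBall c r := by
  have hr : 0 ≤ r := nonneg_of_mul_nonneg_right ((norm_nonneg G).trans hG) hσ
  suffices ∃ ν : E, ‖ν‖ = 1 ∧ 0 ≤ ⟪z - p, ν⟫ ∧ ∀ w ∈ s, ‖w - p‖ ^ 2 + 2 * r * ⟪w - p, ν⟫ ≤ 0 by
    obtain ⟨ν, hν, hzν, hsν⟩ := this
    refine ⟨p - r • ν, fun w hw => (mem_closedBall_sub_smul_iff hν hr).2 (hsν w hw), fun hz => ?_⟩
    rw [mem_closedBall_sub_smul_iff hν hr] at hz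
    have hzp' : 0 < ‖z - p‖ := norm_pos_iff.2 (sub_ne_zero.2 hzp)
    nlinarith [mul_nonneg hr hzν]
  rcases eq_or_ne G 0 with rfl | hG0
  · refine ⟨‖z - p‖⁻¹ • (z - p), norm_smul_inv_norm (sub_ne_zero.2 hzp), ?_, fun w hw => ?_⟩
    · rw [real_inner_smul_right]
      exact mul_nonneg (by positivity) real_inner_self_nonneg
    · have hwp : ‖w - p‖ ^ 2 ≤ 0 := by nlinarith [hs w hw, inner_zero_left (𝕜 := ℝ) (w - p)]
      have hwp0 : w - p = 0 := by simpa using hwp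
      simp [hwp0]
  · refine ⟨‖G‖⁻¹ • G, norm_smul_inv_norm hG0, ?_, fun w hw => ?_⟩
    · rw [real_inner_smul_right]
      exact mul_nonneg (by positivity) hzG
    · have hri : r * ⟪G, w - p⟫ ≤ -(‖G‖ / 2 * ‖w - p‖ ^ 2) := by
        nlinarith [mul_le_mul_of_nonneg_left (hs w hw) hr,
          mul_nonneg (sub_nonneg.2 hG) (sq_nonneg ‖w - p‖)]
      have hGpos : 0 < ‖G‖ := norm_pos_iff.2 hG0
      calc ‖w - p‖ ^ 2 + 2 * r * ⟪w - p, ‖G‖⁻¹ • G⟫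
          = ‖w - p‖ ^ 2 + 2 * ‖G‖⁻¹ * (r * ⟪G, w - p⟫) := by
            rw [real_inner_smul_right, real_inner_comm]; ring
        _ ≤ ‖w - p‖ ^ 2 + 2 * ‖G‖⁻¹ * -(‖G‖ / 2 * ‖w - p‖ ^ 2) := by gcongr
        _ = 0 := by field_simp; ring

variable [CompleteSpace E] {f : E → ℝ} {K : ℝ≥0}

theorem image_sub_inv_smul_gradient_le (hf : Differentiable ℝ f)
    (hlip : LipschitzWith K (fderiv ℝ f)) (x : E) :
    f (x - (K : ℝ)⁻¹ • ∇ f x) ≤ f x - (K : ℝ)⁻¹ / 2 * ‖∇ f x‖ ^ 2 := by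
  have h := image_add_le_of_lipschitzWith_fderiv hf hlip x (-((K : ℝ)⁻¹ • ∇ f x))
  rw [← sub_eq_add_neg, map_neg, map_smul, ← inner_gradient_left, real_inner_self_eq_norm_sq,
    norm_neg, norm_smul, Real.norm_of_nonneg (by positivity), mul_pow, smul_eq_mul] at h
  have hK : (K : ℝ) * (K : ℝ)⁻¹ ^ 2 = (K : ℝ)⁻¹ := by
    rw [inv_pow, ← div_eq_mul_inv, sq, div_self_mul_self']
  linear_combination h + ‖∇ f x‖ ^ 2 / 2 * hK

theorem sq_norm_gradient_le (hK : 0 < K) (hf0 : ∀ x, 0 ≤ f x) (hf : Differentiable ℝ f)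
    (hlip : LipschitzWith K (fderiv ℝ f)) (x : E) : ‖∇ f x‖ ^ 2 ≤ 2 * K * f x := by
  have h := (hf0 _).trans (image_sub_inv_smul_gradient_le hf hlip x)
  have hK' : (0 : ℝ) < K := hK
  field_simp at h
  linarith

theorem exists_closedBall_superset_sublevel_notMem (hf0 : ∀ x, 0 ≤ f x)
    (hf : Differentiable ℝ f) (hK : 0 < K) (hlip : LipschitzWith K (fderiv ℝ f)) {σ : ℝ}
    (hσ : 0 < σ) (hsc : ∀ x h, f x + fderiv ℝ f x h + σ / 2 * ‖h‖ ^ 2 ≤ f (x + h))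
    {ω r : ℝ} (hr : √(2 * K * ω) ≤ σ * r) {x z : E} (hx : f x ≤ ω) (hz : ω < f z) :
    ∃ c, {y | f y ≤ ω} ⊆ closedBall c r ∧ z ∉ closedBall c r := by
  set Ω := {y | f y ≤ ω}
  have hconv : Convex ℝ Ω := by
    simpa using (convexOn_univ_of_add_fderiv_le fun y h =>
      (le_add_of_nonneg_right (by positivity)).trans (hsc y h)).convex_le ω
  obtain ⟨p, hpΩ, hp⟩ := exists_norm_eq_iInf_of_complete_convex ⟨x, hx⟩
    (isClosed_le hf.continuous continuous_const).isComplete hconv z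
  have hproj := (norm_eq_iInf_iff_real_inner_le_zero hconv hpΩ).1 hp
  have hzp : z ≠ p := by rintro rfl; exact hz.not_ge hpΩ
  have hfp : f p = ω := by
    refine (le_iff_eq_or_lt.1 hpΩ).resolve_right fun hlt => hzp ?_
    refine eq_of_mem_interior_of_forall_inner_sub_nonpos ?_ hproj
    exact interior_maximal (fun y hy => le_of_lt hy) (isOpen_lt hf.continuous continuous_const) hlt
  refine exists_closedBall_superset_notMem (G := ∇ f p) hσ ?_ hzp ?_ fun w hw => ?_
  · exact (Real.le_sqrt_of_sq_le (hfp ▸ sq_norm_gradient_le hK hf0 hf hlip p)).trans hr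
  · have hstep : p - (K : ℝ)⁻¹ • ∇ f p ∈ Ω :=
      (image_sub_inv_smul_gradient_le hf hlip p).trans (hfp ▸ sub_le_self _ (by positivity))
    have := hproj _ hstep
    rw [sub_sub_cancel_left, inner_neg_right, real_inner_smul_right, neg_nonpos] at this
    exact nonneg_of_mul_nonneg_right this (inv_pos.2 (NNReal.coe_pos.2 hK))
  · have := hsc p (w - p)
    rw [add_sub_cancel, ← inner_gradient_left] at this
    linarith [show f w ≤ ω from hw]

end

theorem sublevel_rConvex_of_strongly_convex_general {n : ℕ}
    (f : EuclideanSpace ℝ (Fin n) → ℝ) (hf0 : ∀ x, 0 ≤ f x)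
    (hdiff : Differentiable ℝ f)
    (L : ℝ) (hL : 0 < L) (hlip : LipschitzWith (Real.toNNReal L) (fderiv ℝ f))
    (σ : ℝ) (hσ : 0 < σ)
    (hsc : ∀ x h : EuclideanSpace ℝ (Fin n),
      f x + fderiv ℝ f x h + σ / 2 * ‖h‖ ^ 2 ≤ f (x + h))
    (ω : ℝ) (r : ℝ) (hr : σ⁻¹ * Real.sqrt (2 * L * ω) ≤ r) :
    RConvex r {x | f x ≤ ω} := by
  intro x hx y hy z hz
  by_contra hzΩ
  have hr' : √(2 * (Real.toNNReal L : ℝ) * ω) ≤ σ * r := by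
    rwa [Real.coe_toNNReal L hL.le, ← inv_mul_le_iff₀ hσ]
  obtain ⟨c, hΩc, hzc⟩ := exists_closedBall_superset_sublevel_notMem hf0 hdiff
    (Real.toNNReal_pos.2 hL) hlip hσ hsc hr' hx (lt_of_not_ge hzΩ)
  exact hzc (hz c (hΩc hx) (hΩc hy))

/-- If `f : ℝⁿ → ℝ₊` is `C^{1,1}` with `L`-Lipschitz derivative and strongly convex with
parameter `σ`, then for every `ω > 0` the sublevel set `{x | f x ≤ ω}` is `r`-convex
whenever `r ≥ σ⁻¹ √(2 L ω)`. -/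
theorem sublevel_rConvex_of_strongly_convex {n : ℕ}
    (f : EuclideanSpace ℝ (Fin n) → ℝ) (hf0 : ∀ x, 0 ≤ f x)
    (hdiff : Differentiable ℝ f)
    (L : ℝ) (hL : 0 < L) (hlip : LipschitzWith (Real.toNNReal L) (fderiv ℝ f))
    (σ : ℝ) (hσ : 0 < σ)
    (hsc : ∀ x h : EuclideanSpace ℝ (Fin n),
      f x + fderiv ℝ f x h + σ / 2 * ‖h‖ ^ 2 ≤ f (x + h))
    (ω : ℝ) (hω : 0 < ω) (r : ℝ) (hr : σ⁻¹ * Real.sqrt (2 * L * ω) ≤ r) :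
    RConvex r {x | f x ≤ ω} :=
  sublevel_rConvex_of_strongly_convex_general f hf0 hdiff L hL hlip σ hσ hsc ω r hr
end

section
/- Let Ω ⊆ ℝⁿ be closed or open, and let (r_i)_{i ∈ ℕ} be a sequence of positive reals converging to some ρ > 0. If Ω is r_i-convex for every i ∈ ℕ, then Ω is ρ-convex. -/
/-!
Write `H_r(x, y)` for the intersection of the closed `r`-balls containing `x` and `y`; it
shrinks as `r` grows, which settles the case where some `rᵢ ≤ ρ`.

For open `Ω`, the homothety of ratio `rᵢ / ρ` about a point `z ∈ H_ρ(x, y)` puts `z` into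
`H_{rᵢ}(xᵢ, yᵢ)`, where `xᵢ → x` and `yᵢ → y`, so `xᵢ, yᵢ ∈ Ω` for large `i`.

For closed `Ω` and `rᵢ ↓ ρ`, every `r`-ball containing `x` and `y` has a `ρ`-ball containing
`x` and `y` whose centre is within `√(r² - ρ²)` of its own, while by Apollonius the midpoint `m`
of `x` and `y` is within `√(r² - d²)` of its centre, `d = |x - y| / 2`. Hence for every
`s ∈ (0, 1]` the point `z + s (m - z)` lies in `H_r(x, y)` once `r` is close to `ρ`, so it lies
in `Ω`, and letting `s → 0` gives `z ∈ Ω`.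
-/

open Filter Metric Set
open scoped Topology RealInnerProductSpace NNReal

open AffineMap

section BallHull

variable {E : Type*}

-- `RConvex r Ω` unfolds to `∀ x ∈ Ω, ∀ y ∈ Ω, ballHull r x y ⊆ Ω`.
def ballHull [PseudoMetricSpace E] (r : ℝ) (x y : E) : Set E :=
  {z | ∀ c, x ∈ closedBall c r → y ∈ closedBall c r → z ∈ closedBall c r}

theorem ballHull_eq_univ [PseudoMetricSpace E] {r : ℝ} {x y : E} (h : r < dist x y / 2) :
    ballHull r x y = univ := by
  refine eq_univ_of_forall fun z c hx hy => absurd (dist_triangle_right x y c) ?_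
  rw [mem_closedBall] at hx hy
  linarith

variable [NormedAddCommGroup E] [NormedSpace ℝ E]

theorem dist_lineMap_le (p q c : E) {t : ℝ} (ht₀ : 0 ≤ t) (ht₁ : t ≤ 1) :
    dist (lineMap p q t) c ≤ (1 - t) * dist p c + t * dist q c := by
  simpa [lineMap_apply_module] using
    (convexOn_dist c convex_univ).2 (mem_univ p) (mem_univ q) (sub_nonneg.2 ht₁) ht₀
      (sub_add_cancel 1 t)

theorem dist_homothety_homothety (p a b : E) (μ : ℝ) :
    dist (homothety p μ a) (homothety p μ b) = |μ| * dist a b := by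
  simp [homothety_apply, dist_eq_norm, ← smul_sub, norm_smul]

theorem ballHull_subset_ballHull {r ρ : ℝ} {x y : E} (h : r ≤ ρ) :
    ballHull ρ x y ⊆ ballHull r x y := by
  intro z hz c hx hy
  by_contra hzc
  rw [mem_closedBall, not_le] at hzc
  have hr : 0 ≤ r := dist_nonneg.trans hx
  -- move the centre away from `z` by `ρ - r`: the `ρ`-ball around it still contains `x`, `y`
  set k := 1 + (ρ - r) / dist z c
  have hδ : dist z c ≠ 0 := by linarith
  have hk : 1 ≤ k := le_add_of_nonneg_right (div_nonneg (by linarith) (by linarith))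
  have hcc' : dist c (lineMap z c k) = ρ - r := by
    rw [dist_right_lineMap, Real.norm_eq_abs, abs_of_nonpos (by linarith)]
    simp only [k]
    field_simp
    ring
  have hzc' : dist z (lineMap z c k) = dist z c + (ρ - r) := by
    rw [dist_left_lineMap, Real.norm_eq_abs, abs_of_nonneg (by linarith)]
    simp only [k]
    field_simp
  have hsub : closedBall c r ⊆ closedBall (lineMap z c k) ρ :=
    closedBall_subset_closedBall' (by linarith)
  have := hz _ (hsub hx) (hsub hy)
  rw [mem_closedBall, hzc'] at this
  linarith

theorem ballHull_self_subset {r : ℝ} (hr : 0 ≤ r) (x : E) : ballHull r x x ⊆ {x} := fun z hz => by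
  simpa using ballHull_subset_ballHull hr hz x (mem_closedBall_self le_rfl)
    (mem_closedBall_self le_rfl)

theorem homothety_mem_ballHull (p : E) {μ ρ : ℝ} (hμ : 0 < μ) {x y z : E}
    (hz : z ∈ ballHull ρ x y) :
    homothety p μ z ∈ ballHull (μ * ρ) (homothety p μ x) (homothety p μ y) := by
  intro c hx hy
  obtain ⟨c, rfl⟩ : ∃ c₀, homothety p μ c₀ = c :=
    ⟨homothety p μ⁻¹ c, by rw [← homothety_mul_apply, mul_inv_cancel₀ hμ.ne', homothety_one]; rfl⟩
  simp only [mem_closedBall, dist_homothety_homothety, abs_of_pos hμ] at hx hy ⊢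
  exact mul_le_mul_of_nonneg_left
    (hz c (le_of_mul_le_mul_left hx hμ) (le_of_mul_le_mul_left hy hμ)) hμ.le

end BallHull

section InnerProductSpace

variable {E : Type*} [NormedAddCommGroup E] [InnerProductSpace ℝ E]

theorem dist_midpoint_sq_le {x y c : E} {r : ℝ} (hx : dist x c ≤ r) (hy : dist y c ≤ r) :
    dist (midpoint ℝ x y) c ^ 2 ≤ r ^ 2 - (dist x y / 2) ^ 2 := by
  have h := EuclideanGeometry.dist_sq_add_dist_sq_eq_two_mul_dist_midpoint_sq_add_half_dist_sq c x y
  rw [dist_comm c x, dist_comm c y, dist_comm c] at h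
  nlinarith [dist_nonneg (x := x) (y := c), dist_nonneg (x := y) (y := c)]

theorem exists_dist_le_sqrt_of_dist_le {x y c : E} {ρ r : ℝ} (hx : dist x c ≤ r)
    (hy : dist y c ≤ r) (hd : dist x y / 2 ≤ ρ) (hρr : ρ < r) :
    ∃ c', dist x c' ≤ ρ ∧ dist y c' ≤ ρ ∧ dist c' c ≤ √(r ^ 2 - ρ ^ 2) := by
  set d := dist x y / 2
  set m := midpoint ℝ x y
  have hd₀ : 0 ≤ d := by positivity
  have hxm : dist x m = d := by simp [m, d, dist_left_midpoint (𝕜 := ℝ), div_eq_inv_mul]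
  have hym : dist y m = d := by
    rw [← hxm]; exact (dist_left_midpoint_eq_dist_right_midpoint x y).symm
  -- the centre moves towards `m` by the fraction `u`, chosen so that `(1 - u) r + u d = ρ`
  set u := (r - ρ) / (r - d)
  have hu : u * (r - d) = r - ρ := div_mul_cancel₀ _ (by linarith)
  have hu₀ : 0 ≤ u := div_nonneg (by linarith) (by linarith)
  have hu₁ : u ≤ 1 := (div_le_one (by linarith)).2 (by linarith)
  have hclose : ∀ w, dist w c ≤ r → dist w m = d → dist w (lineMap c m u) ≤ ρ := fun w hw hwm => by
    rw [dist_comm]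
    calc dist (lineMap c m u) w ≤ (1 - u) * dist c w + u * dist m w := dist_lineMap_le c m w hu₀ hu₁
      _ = (1 - u) * dist w c + u * d := by rw [dist_comm c, dist_comm m, hwm]
      _ ≤ (1 - u) * r + u * d := by gcongr
      _ = ρ := by linarith
  refine ⟨lineMap c m u, hclose x hx hxm, hclose y hy hym, ?_⟩
  rw [dist_lineMap_left, Real.norm_eq_abs, abs_of_nonneg hu₀, dist_comm]
  have hsq : dist m c ^ 2 ≤ (r - d) * (r + d) := (dist_midpoint_sq_le hx hy).trans_eq (by ring)
  apply Real.le_sqrt_of_sq_le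
  calc (u * dist m c) ^ 2 ≤ u ^ 2 * ((r - d) * (r + d)) := by rw [mul_pow]; gcongr
    _ = u * (r - ρ) * (r + d) := by rw [← hu]; ring
    _ ≤ 1 * (r - ρ) * (r + ρ) := by gcongr; linarith
    _ = r ^ 2 - ρ ^ 2 := by ring

theorem lineMap_midpoint_mem_ballHull {x y z : E} {ρ r s : ℝ} (hz : z ∈ ballHull ρ x y)
    (hd : dist x y / 2 ≤ ρ) (hρr : ρ < r) (hs₀ : 0 ≤ s) (hs₁ : s ≤ 1)
    (h : (1 - s) * (ρ + √(r ^ 2 - ρ ^ 2)) + s * √(r ^ 2 - (dist x y / 2) ^ 2) ≤ r) :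
    lineMap z (midpoint ℝ x y) s ∈ ballHull r x y := by
  intro c hx hy
  rw [mem_closedBall] at hx hy ⊢
  obtain ⟨c', hxc', hyc', hc'c⟩ := exists_dist_le_sqrt_of_dist_le hx hy hd hρr
  have hzc : dist z c ≤ ρ + √(r ^ 2 - ρ ^ 2) :=
    (dist_triangle z c' c).trans (add_le_add (hz c' hxc' hyc') hc'c)
  calc dist (lineMap z (midpoint ℝ x y) s) c
      ≤ (1 - s) * dist z c + s * dist (midpoint ℝ x y) c := dist_lineMap_le _ _ _ hs₀ hs₁
    _ ≤ (1 - s) * (ρ + √(r ^ 2 - ρ ^ 2)) + s * √(r ^ 2 - (dist x y / 2) ^ 2) := by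
      gcongr
      exact Real.le_sqrt_of_sq_le (dist_midpoint_sq_le hx hy)
    _ ≤ r := h

theorem eventually_lineMap_midpoint_mem_ballHull {x y z : E} {ρ s : ℝ} (hxy : x ≠ y)
    (hz : z ∈ ballHull ρ x y) (hd : dist x y / 2 ≤ ρ) (hs₀ : 0 < s) (hs₁ : s ≤ 1) :
    ∀ᶠ r in 𝓝[>] ρ, lineMap z (midpoint ℝ x y) s ∈ ballHull r x y := by
  set d := dist x y / 2
  have hd₀ : 0 < d := by have := dist_pos.2 hxy; positivity
  set f : ℝ → ℝ := fun r => (1 - s) * (ρ + √(r ^ 2 - ρ ^ 2)) + s * √(r ^ 2 - d ^ 2)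
  have hf : Continuous f := by fun_prop
  have hfρ : f ρ < ρ := by
    have : √(ρ ^ 2 - d ^ 2) < ρ := (Real.sqrt_lt' (by linarith)).2 (by nlinarith)
    simp only [f, sub_self, Real.sqrt_zero, add_zero]
    nlinarith
  have hlt : ∀ᶠ r in 𝓝 ρ, f r < r := (hf.tendsto ρ).eventually_lt tendsto_id hfρ
  filter_upwards [self_mem_nhdsWithin, nhdsWithin_le_nhds hlt] with r hr hfr
  exact lineMap_midpoint_mem_ballHull hz hd hr hs₀.le hs₁ hfr.le

end InnerProductSpace

section RConvex

variable {n : ℕ} {Ω : Set (EuclideanSpace ℝ (Fin n))}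

theorem RConvex.mono {r ρ : ℝ} (h : RConvex r Ω) (hr : r ≤ ρ) : RConvex ρ Ω :=
  fun x hx y hy => (ballHull_subset_ballHull hr).trans (h x hx y hy)

variable {ι : Type*} {l : Filter ι} [l.NeBot] {r : ι → ℝ} {ρ : ℝ}

theorem RConvex.of_tendsto_of_isOpen (hΩ : IsOpen Ω) (hρ : 0 < ρ) (hlim : Tendsto r l (𝓝 ρ))
    (hconv : ∀ i, RConvex (r i) Ω) : RConvex ρ Ω := by
  intro x hx y hy z hz
  have hμ : Tendsto (fun i => r i / ρ) l (𝓝 1) := by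
    simpa [hρ.ne'] using hlim.div_const ρ
  have hnear : ∀ w ∈ Ω, ∀ᶠ i in l, homothety z (r i / ρ) w ∈ Ω := fun w hw => by
    simp only [homothety_eq_lineMap]
    exact ((lineMap_continuous.tendsto' 1 w (by simp)).comp hμ).eventually_mem (hΩ.mem_nhds hw)
  obtain ⟨i, hxi, hyi, hμi⟩ :=
    ((hnear x hx).and ((hnear y hy).and (hμ.eventually (lt_mem_nhds one_pos)))).exists
  have := homothety_mem_ballHull z hμi hz
  rw [div_mul_cancel₀ _ hρ.ne', homothety_apply_same] at this
  exact hconv i _ hxi _ hyi this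

theorem RConvex.of_tendsto_of_isClosed (hΩ : IsClosed Ω) (hlim : Tendsto r l (𝓝 ρ))
    (hconv : ∀ i, RConvex (r i) Ω) : RConvex ρ Ω := by
  by_cases hle : ∃ i, r i ≤ ρ
  · obtain ⟨i, hi⟩ := hle
    exact (hconv i).mono hi
  push Not at hle
  have hlim' : Tendsto r l (𝓝[>] ρ) := tendsto_nhdsWithin_iff.2 ⟨hlim, .of_forall hle⟩
  intro x hx y hy z hz
  rcases lt_or_ge ρ (dist x y / 2) with hfar | hd
  · obtain ⟨i, hi⟩ := (hlim.eventually (gt_mem_nhds hfar)).exists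
    exact hconv i x hx y hy (show z ∈ ballHull (r i) x y by rw [ballHull_eq_univ hi]; trivial)
  rcases eq_or_ne x y with rfl | hxy
  · rw [ballHull_self_subset (by simpa using hd) x hz]
    exact hx
  have hmem : ∀ s ∈ Ioc (0 : ℝ) 1, lineMap z (midpoint ℝ x y) s ∈ Ω := fun s hs =>
    have ⟨i, hi⟩ :=
      (hlim'.eventually (eventually_lineMap_midpoint_mem_ballHull hxy hz hd hs.1 hs.2)).exists
    hconv i x hx y hy hi
  refine hΩ.mem_of_tendsto ?_ (mem_of_superset (Ioc_mem_nhdsGT one_pos) hmem)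
  exact (lineMap_continuous.tendsto' 0 z (by simp)).mono_left nhdsWithin_le_nhds

end RConvex

theorem rConvex_of_tendsto_general {n : ℕ} (Ω : Set (EuclideanSpace ℝ (Fin n)))
    (hΩ : IsClosed Ω ∨ IsOpen Ω)
    (r : ℕ → ℝ)
    (ρ : ℝ) (hρ : 0 < ρ) (hlim : Tendsto r atTop (𝓝 ρ))
    (hconv : ∀ i, RConvex (r i) Ω) :
    RConvex ρ Ω := by
  rcases hΩ with hΩ | hΩ
  · exact RConvex.of_tendsto_of_isClosed hΩ hlim hconv
  · exact RConvex.of_tendsto_of_isOpen hΩ hρ hlim hconv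

/-- Lemma 12: if a closed or open set `Ω ⊆ ℝⁿ` is `rᵢ`-convex for every term of a sequence
of positive reals `rᵢ` converging to `ρ > 0`, then `Ω` is `ρ`-convex. -/
theorem rConvex_of_tendsto {n : ℕ} (Ω : Set (EuclideanSpace ℝ (Fin n)))
    (hΩ : IsClosed Ω ∨ IsOpen Ω)
    (r : ℕ → ℝ) (hrpos : ∀ i, 0 < r i)
    (ρ : ℝ) (hρ : 0 < ρ) (hlim : Tendsto r atTop (𝓝 ρ))
    (hconv : ∀ i, RConvex (r i) Ω) :
    RConvex ρ Ω :=
  rConvex_of_tendsto_general Ω hΩ r ρ hρ hlim hconv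
end

section
/- Let s > 0, U ⊆ ℝⁿ open, m ∈ ℕ, g₁, …, g_m : U → ℝ continuous maps that are C^{1,1}-submersions on their zero sets, and let Ω = {x ∈ U | g₁(x) ≤ 0, …, g_m(x) ≤ 0} be closed in ℝⁿ and connected. Assume 0 is a boundary point of Ω and g₁(0) = 0. If liminf_{t→0⁺} g₁'(t·h)h / t > (1/s)·‖g₁'(0)‖·‖h‖² for every nonzero h ∈ C(0) ∩ ker g₁'(0), then the vector v = g₁'(0)* / ‖g₁'(0)‖ quadratically supports Ω with radius s at 0 locally. -/
open Filter Metric Set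
open scoped Topology RealInnerProductSpace NNReal

/-- The vector `v` quadratically supports `Ω` with radius `s` at `x` locally. -/
def QuadSupportsAt {n : ℕ} (s : ℝ) (Ω : Set (EuclideanSpace ℝ (Fin n)))
    (v x : EuclideanSpace ℝ (Fin n)) : Prop :=
  ‖v‖ = 1 ∧ ∃ U' ∈ 𝓝 x, ∀ (h : EuclideanSpace ℝ (Fin n)) (μ : ℝ),
    ⟪h, v⟫ = 0 → x + h - μ • v ∈ U' ∩ Ω → ‖h‖ ^ 2 ≤ 2 * s * μ

/-!
Suppose points `y ∈ Ω` arbitrarily close to `0` violate the quadratic support inequality.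
Along an ultrafilter of such points the directions `y / ‖y‖` converge to a unit vector `d`.
Since all `g j (y) ≤ 0`, `d` lies in the linearized cone `C(0)`, and the violation itself forces
`g₁'(0) d ≥ 0`, so `d ∈ C(0) ∩ ker g₁'(0)`. The second-order hypothesis then gives
`c > ‖g₁'(0)‖ / s` with `g₁'(t d) d ≥ c t` for small `t > 0`; integrating along `t ↦ t d` and
comparing `y` with `‖y‖ d` via the Lipschitz bound on `g₁'` yields
`g₁(y) ≥ g₁'(0) y + (c' / 2) ‖y‖²` for any `c' < c`, which contradicts `g₁(y) ≤ 0` and the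
violation for `y` close enough to `0`.
-/

section

variable {E : Type*} [NormedAddCommGroup E] [NormedSpace ℝ E]

theorem exists_ultrafilter_tendsto_dir [ProperSpace E] {p : E → Prop}
    (h : ∃ᶠ y in 𝓝 (0 : E), p y) (hp : ∀ y, p y → y ≠ 0) :
    ∃ (𝒰 : Ultrafilter E) (d : E), ‖d‖ = 1 ∧ (𝒰 : Filter E) ≤ 𝓝 0 ∧ (∀ᶠ y in (𝒰 : Filter E), p y) ∧
      Tendsto (fun y => ‖y‖⁻¹ • y) (𝒰 : Filter E) (𝓝 d) := by
  have := frequently_iff_neBot.1 h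
  set 𝒰 := Ultrafilter.of (𝓝 (0 : E) ⊓ 𝓟 {y | p y})
  have h𝒰 : ↑𝒰 ≤ 𝓝 (0 : E) ⊓ 𝓟 {y | p y} := Ultrafilter.of_le _
  have hp𝒰 : ∀ᶠ y in (𝒰 : Filter E), p y := le_principal_iff.1 (h𝒰.trans inf_le_right)
  have hsphere : ↑(𝒰.map fun y => ‖y‖⁻¹ • y) ≤ 𝓟 (sphere (0 : E) 1) :=
    le_principal_iff.2 <| hp𝒰.mono fun y hy => by simpa using norm_smul_inv_norm (𝕜 := ℝ) (hp y hy)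
  obtain ⟨d, hd, hd𝒰⟩ := (isCompact_sphere (0 : E) 1).ultrafilter_le_nhds _ hsphere
  exact ⟨𝒰, d, by simpa using hd, h𝒰.trans inf_le_left, hp𝒰, hd𝒰⟩

theorem HasFDerivAt.tendsto_div_norm_of_tendsto_dir {f : E → ℝ} {f' : E →L[ℝ] ℝ} {d : E}
    {l : Filter E} (hf : HasFDerivAt f f' 0) (hl : l ≤ 𝓝 0)
    (hdir : Tendsto (fun y => ‖y‖⁻¹ • y) l (𝓝 d)) :
    Tendsto (fun y => (f y - f 0) / ‖y‖) l (𝓝 (f' d)) := by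
  have hrem : Tendsto (fun y => (f y - f 0 - f' y) / ‖y‖) l (𝓝 0) := by
    have := hf.isLittleO.norm_right.tendsto_div_nhds_zero.mono_left hl
    simpa only [sub_zero, norm_sub_rev] using this
  convert hrem.add ((f'.continuous.tendsto d).comp hdir) using 1
  · ext y
    simp only [Function.comp_apply, map_smul, smul_eq_mul]
    ring
  · rw [zero_add]

theorem HasFDerivAt.apply_nonpos_of_tendsto_dir {f : E → ℝ} {f' : E →L[ℝ] ℝ} {d : E}
    {l : Filter E} [l.NeBot] (hf : HasFDerivAt f f' 0) (hl : l ≤ 𝓝 0)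
    (hdir : Tendsto (fun y => ‖y‖⁻¹ • y) l (𝓝 d)) (h : ∀ᶠ y in l, f y ≤ f 0) : f' d ≤ 0 :=
  le_of_tendsto (hf.tendsto_div_norm_of_tendsto_dir hl hdir) <|
    h.mono fun _ hy => div_nonpos_of_nonpos_of_nonneg (sub_nonpos.2 hy) (norm_nonneg _)

theorem HasFDerivAt.apply_nonneg_of_tendsto_dir {f : E → ℝ} {f' : E →L[ℝ] ℝ} {d : E} {C : ℝ}
    {l : Filter E} [l.NeBot] (hf : HasFDerivAt f f' 0) (hl : l ≤ 𝓝 0)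
    (hdir : Tendsto (fun y => ‖y‖⁻¹ • y) l (𝓝 d)) (h : ∀ᶠ y in l, f 0 - C * ‖y‖ ^ 2 ≤ f y) :
    0 ≤ f' d := by
  have hbound : Tendsto (fun y => -(C * ‖y‖)) l (𝓝 0) := by
    simpa using (tendsto_norm_zero.mono_left hl).const_mul C |>.neg
  refine le_of_tendsto_of_tendsto hbound (hf.tendsto_div_norm_of_tendsto_dir hl hdir) ?_
  filter_upwards [h] with y hy
  rcases (norm_nonneg y).eq_or_lt with hy0 | hy0
  · simp [← hy0]
  · rw [le_div_iff₀ hy0]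
    nlinarith

theorem add_mul_sq_le_of_mul_le_deriv {φ φ' : ℝ → ℝ} {c r : ℝ} (hr : 0 ≤ r)
    (hφ : ContinuousOn φ (Icc 0 r)) (hφ' : ∀ t ∈ Ioo 0 r, HasDerivAt φ (φ' t) t)
    (hc : ∀ t ∈ Ioo 0 r, c * t ≤ φ' t) : φ 0 + c / 2 * r ^ 2 ≤ φ r := by
  have hmono : MonotoneOn (fun t => φ t - c / 2 * t ^ 2) (Icc 0 r) := by
    refine monotoneOn_of_hasDerivWithinAt_nonneg (f' := fun t => φ' t - c * t) (convex_Icc 0 r)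
      (hφ.sub (continuousOn_const.mul (continuousOn_pow 2))) (fun t ht => ?_) (fun t ht => ?_)
    · rw [interior_Icc] at ht
      have hψ : HasDerivAt (fun t => φ t - c / 2 * t ^ 2) (φ' t - c * t) t :=
        ((hφ' t ht).fun_sub ((hasDerivAt_pow 2 t).const_mul (c / 2))).congr_deriv (by ring)
      exact hψ.hasDerivWithinAt
    · rw [interior_Icc] at ht
      exact sub_nonneg.2 (hc t ht)
  have := hmono (left_mem_Icc.2 hr) (right_mem_Icc.2 hr) hr
  simp only at this
  linarith

theorem le_image_of_mul_le_fderiv_smul_apply {f : E → ℝ} {K c ρ : ℝ} {d y : E} (hK : 0 ≤ K)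
    (hdiff : ∀ z ∈ ball (0 : E) ρ, DifferentiableAt ℝ f z)
    (hlip : ∀ z ∈ ball (0 : E) ρ, ‖fderiv ℝ f z - fderiv ℝ f 0‖ ≤ K * ‖z‖) (hd1 : ‖d‖ = 1)
    (hc : ∀ t ∈ Ioo 0 ρ, c * t ≤ fderiv ℝ f (t • d) d) (hy : ‖y‖ < ρ) :
    f 0 + fderiv ℝ f 0 (y - ‖y‖ • d) + c / 2 * ‖y‖ ^ 2 - K * ‖y‖ * ‖y - ‖y‖ • d‖ ≤ f y := by
  set r := ‖y‖
  have hball : closedBall (0 : E) r ⊆ ball 0 ρ := closedBall_subset_ball hy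
  have hseg : ∀ t ∈ Icc 0 r, t • d ∈ ball (0 : E) ρ := fun t ht =>
    hball (by simpa [norm_smul, hd1, abs_of_nonneg ht.1] using ht.2)
  have hdir : f 0 + c / 2 * r ^ 2 ≤ f (r • d) := by
    have hφ : ContinuousOn (fun t : ℝ => f (t • d)) (Icc 0 r) := fun t ht =>
      (hdiff _ (hseg t ht)).continuousAt.comp_continuousWithinAt (f := fun t : ℝ => t • d)
        (by fun_prop)
    have hφ' : ∀ t ∈ Ioo 0 r, HasDerivAt (fun t : ℝ => f (t • d)) (fderiv ℝ f (t • d) d) t :=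
      fun t ht => by
        have := (hdiff _ (hseg t (Ioo_subset_Icc_self ht))).hasFDerivAt.comp_hasDerivAt t
          ((hasDerivAt_id t).smul_const d)
        rwa [one_smul] at this
    simpa using add_mul_sq_le_of_mul_le_deriv (norm_nonneg y) hφ hφ'
      fun t ht => hc t ⟨ht.1, ht.2.trans hy⟩
  have hmvt : ‖f y - f (r • d) - fderiv ℝ f 0 (y - r • d)‖ ≤ K * r * ‖y - r • d‖ :=
    (convex_closedBall 0 r).norm_image_sub_le_of_norm_fderiv_le'
      (fun z hz => hdiff z (hball hz))
      (fun z hz => (hlip z (hball hz)).trans (by gcongr; simpa using hz))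
      (by simp [r, norm_smul, hd1]) (by simp [r])
  rw [Real.norm_eq_abs] at hmvt
  linarith [(abs_le.1 hmvt).1]

theorem eventually_mul_lt_fderiv_smul_apply_of_lt_liminf {f : E → ℝ} {K c : ℝ} {d : E}
    (hlip : ∀ᶠ z in 𝓝 0, ‖fderiv ℝ f z - fderiv ℝ f 0‖ ≤ K * ‖z‖) (hLd : fderiv ℝ f 0 d = 0)
    (hc : c < liminf (fun t : ℝ => fderiv ℝ f (t • d) d / t) (𝓝[>] 0)) :
    ∀ᶠ t in 𝓝[>] (0 : ℝ), c * t < fderiv ℝ f (t • d) d := by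
  have hsmul : Tendsto (fun t : ℝ => t • d) (𝓝[>] 0) (𝓝 0) :=
    ((continuous_id.smul continuous_const).tendsto' 0 0 (zero_smul ℝ d)).mono_left
      nhdsWithin_le_nhds
  have hbdd : IsBoundedUnder (· ≥ ·) (𝓝[>] 0) (fun t : ℝ => fderiv ℝ f (t • d) d / t) := by
    refine ⟨-(K * ‖d‖ ^ 2), eventually_map.2 ?_⟩
    filter_upwards [hsmul.eventually hlip, self_mem_nhdsWithin] with t ht (htpos : 0 < t)
    have hdiff : |(fderiv ℝ f (t • d) - fderiv ℝ f 0) d| ≤ K * ‖t • d‖ * ‖d‖ := by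
      rw [← Real.norm_eq_abs]
      exact ((fderiv ℝ f (t • d) - fderiv ℝ f 0).le_opNorm d).trans (by gcongr)
    rw [sub_apply, hLd, sub_zero, norm_smul, Real.norm_eq_abs, abs_of_pos htpos] at hdiff
    rw [ge_iff_le, le_div_iff₀ htpos]
    linarith [(abs_le.1 hdiff).1]
  filter_upwards [eventually_lt_of_lt_liminf hc hbdd, self_mem_nhdsWithin] with t ht htpos
  exact (lt_div_iff₀ htpos).1 ht

theorem eventually_le_image_of_mul_le_fderiv_smul_apply {f : E → ℝ} {K c c' : ℝ} {d : E}
    {l : Filter E} (hK : 0 ≤ K) (hdiff : ∀ᶠ z in 𝓝 0, DifferentiableAt ℝ f z)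
    (hlip : ∀ᶠ z in 𝓝 0, ‖fderiv ℝ f z - fderiv ℝ f 0‖ ≤ K * ‖z‖) (hd1 : ‖d‖ = 1)
    (hLd : fderiv ℝ f 0 d = 0) (hc : ∀ᶠ t in 𝓝[>] 0, c * t ≤ fderiv ℝ f (t • d) d)
    (hc' : c' < c) (hl : l ≤ 𝓝 0) (hdir : Tendsto (fun y => ‖y‖⁻¹ • y) l (𝓝 d)) :
    ∀ᶠ y in l, f 0 + fderiv ℝ f 0 y + c' / 2 * ‖y‖ ^ 2 ≤ f y := by
  obtain ⟨ρ₁, hρ₁, hball⟩ := Metric.eventually_nhds_iff_ball.1 (hdiff.and hlip)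
  obtain ⟨ρ₂, hρ₂, hIoo⟩ := mem_nhdsGT_iff_exists_Ioo_subset.1 hc
  have hsmall : ∀ᶠ y in l, K * ‖‖y‖⁻¹ • y - d‖ < (c - c') / 2 := by
    have : Tendsto (fun y => K * ‖‖y‖⁻¹ • y - d‖) l (𝓝 0) := by
      simpa using ((hdir.sub_const d).norm.const_mul K)
    exact this.eventually_lt_const (by linarith)
  filter_upwards [hsmall, hl (ball_mem_nhds 0 (lt_min hρ₁ hρ₂))] with y hy hyρ
  rw [mem_ball_zero_iff, lt_min_iff] at hyρ
  have hbound := le_image_of_mul_le_fderiv_smul_apply (ρ := min ρ₁ ρ₂) hK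
    (fun z hz => (hball z (ball_subset_ball (min_le_left _ _) hz)).1)
    (fun z hz => (hball z (ball_subset_ball (min_le_left _ _) hz)).2) hd1
    (fun t ht => hIoo ⟨ht.1, ht.2.trans_le (min_le_right _ _)⟩) (lt_min hyρ.1 hyρ.2)
  have hdist : ‖y - ‖y‖ • d‖ = ‖y‖ * ‖‖y‖⁻¹ • y - d‖ := by
    rcases (norm_nonneg y).eq_or_lt with hy0 | hy0
    · simp [norm_eq_zero.1 hy0.symm]
    · rw [← abs_of_pos hy0, ← Real.norm_eq_abs, ← norm_smul, smul_sub, smul_smul,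
        Real.norm_eq_abs, abs_of_pos hy0, mul_inv_cancel₀ hy0.ne', one_smul]
  rw [map_sub, map_smul, hLd, smul_zero, sub_zero, hdist] at hbound
  nlinarith [mul_le_mul_of_nonneg_left hy.le (sq_nonneg ‖y‖)]

end

theorem quadSupportsAt_of_eventually {n : ℕ} {s : ℝ} {Ω : Set (EuclideanSpace ℝ (Fin n))}
    {L : EuclideanSpace ℝ (Fin n) →L[ℝ] ℝ} (hL : L ≠ 0)
    (h : ∀ᶠ y in 𝓝 0, y ∈ Ω → ‖L‖ * ‖y‖ ^ 2 ≤ -(2 * s * L y)) :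
    QuadSupportsAt s Ω (‖L‖⁻¹ • (InnerProductSpace.toDual ℝ _).symm L) 0 := by
  set v := ‖L‖⁻¹ • (InnerProductSpace.toDual ℝ (EuclideanSpace ℝ (Fin n))).symm L
  have hL0 : 0 < ‖L‖ := norm_pos_iff.2 hL
  have hv : ‖v‖ = 1 := by
    rw [norm_smul, LinearIsometryEquiv.norm_map, norm_inv, norm_norm, inv_mul_cancel₀ hL0.ne']
  have hLv : ∀ y, L y = ‖L‖ * ⟪y, v⟫ := fun y => by
    rw [real_inner_smul_right, real_inner_comm, InnerProductSpace.toDual_symm_apply,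
      mul_inv_cancel_left₀ hL0.ne']
  refine ⟨hv, _, h, fun w μ hw hmem => ?_⟩
  rw [zero_add] at hmem
  have key := hmem.1 hmem.2
  have hnorm : ‖w - μ • v‖ ^ 2 = ‖w‖ ^ 2 + μ ^ 2 := by
    rw [norm_sub_sq_real, real_inner_smul_right, hw, norm_smul, hv, Real.norm_eq_abs, mul_one,
      sq_abs]
    ring
  have hinner : ⟪w - μ • v, v⟫ = -μ := by
    rw [inner_sub_left, real_inner_smul_left, hw, real_inner_self_eq_norm_sq, hv]
    ring
  rw [hLv, hinner, hnorm] at key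
  nlinarith [mul_nonneg hL0.le (sq_nonneg μ)]

theorem quadSupport_of_strict_secondOrder_general {n m : ℕ} (hm : 0 < m) (s : ℝ) (hs : 0 < s)
    (U : Set (EuclideanSpace ℝ (Fin n)))
    (g : Fin m → EuclideanSpace ℝ (Fin n) → ℝ)
    (hgs : ∀ i, C11SubmersionOnZeroSet U (g i))
    (Ω : Set (EuclideanSpace ℝ (Fin n)))
    (hΩ : Ω = {x | x ∈ U ∧ ∀ i, g i x ≤ 0})
    (hcl : IsClosed Ω)
    (hb : (0 : EuclideanSpace ℝ (Fin n)) ∈ frontier Ω)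
    (hz : g ⟨0, hm⟩ 0 = 0)
    (hsosc : ∀ h : EuclideanSpace ℝ (Fin n), h ≠ 0 →
      (∀ j, g j 0 = 0 → fderiv ℝ (g j) 0 h ≤ 0) →
      fderiv ℝ (g ⟨0, hm⟩) 0 h = 0 →
      (1 / s) * ‖fderiv ℝ (g ⟨0, hm⟩) 0‖ * ‖h‖ ^ 2 <
        liminf (fun t : ℝ => fderiv ℝ (g ⟨0, hm⟩) (t • h) h / t) (𝓝[>] (0:ℝ))) :
    QuadSupportsAt s Ω
      (‖fderiv ℝ (g ⟨0, hm⟩) 0‖⁻¹ •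
        (InnerProductSpace.toDual ℝ (EuclideanSpace ℝ (Fin n))).symm
          (fderiv ℝ (g ⟨0, hm⟩) 0))
      0 := by
  set f := g ⟨0, hm⟩
  set L := fderiv ℝ f 0
  have hΩg : ∀ y ∈ Ω, y ∈ U ∧ ∀ j, g j y ≤ 0 := by rw [hΩ]; exact fun _ => id
  have h0U : (0 : EuclideanSpace ℝ (Fin n)) ∈ U := (hΩg 0 (hcl.frontier_subset hb)).1
  obtain ⟨⟨V, hV, h0V, -, hdiff, K, hK⟩, hL⟩ := hgs _ 0 h0U hz
  refine quadSupportsAt_of_eventually hL ?_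
  by_contra hbad
  simp only [not_eventually, Classical.not_imp, not_le] at hbad
  obtain ⟨𝒰, d, hd1, h𝒰, hbad𝒰, hdir⟩ := exists_ultrafilter_tendsto_dir hbad
    (by rintro y ⟨-, hy⟩ rfl; simp at hy)
  have hcone : ∀ j, g j 0 = 0 → fderiv ℝ (g j) 0 d ≤ 0 := fun j hj => by
    obtain ⟨⟨W, -, h0W, -, hdiffj, -⟩, -⟩ := hgs j 0 h0U hj
    exact (hdiffj 0 h0W).hasFDerivAt.apply_nonpos_of_tendsto_dir h𝒰 hdir
      (hbad𝒰.mono fun y hy => hj ▸ (hΩg y hy.1).2 j)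
  have hLd : L d = 0 := by
    refine le_antisymm (hcone _ hz) (L.hasFDerivAt.apply_nonneg_of_tendsto_dir (C := ‖L‖ / (2 * s))
      h𝒰 hdir (hbad𝒰.mono fun y hy => ?_))
    rw [map_zero, zero_sub, neg_le, div_mul_eq_mul_div, le_div_iff₀ (by positivity)]
    linarith [hy.2]
  have hlip : ∀ᶠ z in 𝓝 0, ‖fderiv ℝ f z - L‖ ≤ K * ‖z‖ :=
    eventually_of_mem (hV.mem_nhds h0V) fun z hz => by
      simpa [dist_eq_norm] using hK.dist_le_mul z hz 0 h0V
  obtain ⟨c, hLc, hc⟩ := exists_between (hsosc d (norm_ne_zero_iff.1 (by simp [hd1])) hcone hLd)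
  obtain ⟨c', hLc', hc'c⟩ := exists_between hLc
  have hgrowth := eventually_le_image_of_mul_le_fderiv_smul_apply K.2
    (eventually_of_mem (hV.mem_nhds h0V) hdiff) hlip hd1 hLd
    ((eventually_mul_lt_fderiv_smul_apply_of_lt_liminf hlip hLd hc).mono fun _ h => h.le) hc'c
    h𝒰 hdir
  obtain ⟨y, ⟨hyΩ, hy⟩, hfy⟩ := (hbad𝒰.and hgrowth).exists
  rw [hd1, one_pow, mul_one, one_div_mul_eq_div, div_lt_iff₀ hs] at hLc'
  have hf0 := (hΩg y hyΩ).2 ⟨0, hm⟩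
  nlinarith [mul_le_mul_of_nonneg_right hLc'.le (sq_nonneg ‖y‖)]

/-- Lemma 15 (case (iii)): under the strict second-order inequality on the critical cone of
the first constraint at `0`, the normalized Riesz representative of `g₁'(0)` quadratically
supports `Ω` with radius `s` at `0` locally. -/
theorem quadSupport_of_strict_secondOrder {n m : ℕ} (hm : 0 < m) (s : ℝ) (hs : 0 < s)
    (U : Set (EuclideanSpace ℝ (Fin n))) (hU : IsOpen U)
    (g : Fin m → EuclideanSpace ℝ (Fin n) → ℝ)
    (hgc : ∀ i, ContinuousOn (g i) U)
    (hgs : ∀ i, C11SubmersionOnZeroSet U (g i))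
    (Ω : Set (EuclideanSpace ℝ (Fin n)))
    (hΩ : Ω = {x | x ∈ U ∧ ∀ i, g i x ≤ 0})
    (hcl : IsClosed Ω) (hconn : IsPreconnected Ω)
    (hb : (0 : EuclideanSpace ℝ (Fin n)) ∈ frontier Ω)
    (hz : g ⟨0, hm⟩ 0 = 0)
    (hsosc : ∀ h : EuclideanSpace ℝ (Fin n), h ≠ 0 →
      (∀ j, g j 0 = 0 → fderiv ℝ (g j) 0 h ≤ 0) →
      fderiv ℝ (g ⟨0, hm⟩) 0 h = 0 →
      (1 / s) * ‖fderiv ℝ (g ⟨0, hm⟩) 0‖ * ‖h‖ ^ 2 <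
        liminf (fun t : ℝ => fderiv ℝ (g ⟨0, hm⟩) (t • h) h / t) (𝓝[>] (0:ℝ))) :
    QuadSupportsAt s Ω
      (‖fderiv ℝ (g ⟨0, hm⟩) 0‖⁻¹ •
        (InnerProductSpace.toDual ℝ (EuclideanSpace ℝ (Fin n))).symm
          (fderiv ℝ (g ⟨0, hm⟩) 0))
      0 :=
  quadSupport_of_strict_secondOrder_general hm s hs U g hgs Ω hΩ hcl hb hz hsosc
end

section
/- Let U ⊆ ℝⁿ be open, m ∈ ℕ, g₁, …, g_m : U → ℝ continuous maps that are C^{1,1}-submersions on their zero sets, and let Ω = {x ∈ U | g₁(x) ≤ 0, …, g_m(x) ≤ 0} be closed in ℝⁿ and connected. If int C(x) ≠ ∅ for every boundary point x of Ω, then Ω is regular closed, i.e. Ω equals the closure of its interior, and the interior of Ω is connected. -/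
open Filter Metric Set
open scoped Topology RealInnerProductSpace NNReal

/-!
Call `h` an inward direction of `Ω` at `x` if `y + t • h` lies in the interior of `Ω` for all
`y ∈ Ω` near `x` and all small `t > 0`. At a boundary point of the sublevel set, any `h` in the
interior of the linearized cone satisfies `gⱼ'(x) h < 0` for the active constraints (their
derivatives being nonzero), and continuity of the derivatives makes the active `gⱼ` strictly
decrease along the segments `y + [0, t] • h`, while the inactive `gᵢ` stay negative; so `h` is
an inward direction. Inward directions at boundary points make `Ω` regular closed, and they give
every point of `Ω` a neighbourhood whose trace on the interior lies in one connected union of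
segments and a ball; connectedness of `Ω` then passes to its interior.
-/

section Topology

variable {X : Type*} [TopologicalSpace X]

theorem isOpen_setOf_mem_and_forall_lt_zero {ι : Type*} [Finite ι] {U : Set X} (hU : IsOpen U)
    {g : ι → X → ℝ} (hgc : ∀ i, ContinuousOn (g i) U) :
    IsOpen {z | z ∈ U ∧ ∀ i, g i z < 0} :=
  isOpen_iff_mem_nhds.2 fun _ hz => (hU.eventually_mem hz.1).and <| eventually_all.2 fun i =>
    ((hgc i).continuousAt (hU.mem_nhds hz.1)).eventually (gt_mem_nhds (hz.2 i))

theorem IsPreconnected.isPreconnected_interior {Ω : Set X} (hΩ : IsPreconnected Ω)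
    (hreg : Ω ⊆ closure (interior Ω))
    (hloc : ∀ x ∈ Ω, ∃ K ⊆ interior Ω, IsPreconnected K ∧ ∀ᶠ y in 𝓝 x, y ∈ interior Ω → y ∈ K) :
    IsPreconnected (interior Ω) := by
  rintro u v hu hv hcov ⟨a, ha, hau⟩ ⟨b, hb, hbv⟩
  have hsplit : Ω ⊆ closure (interior Ω ∩ u) ∪ closure (interior Ω ∩ v) := by
    rwa [← closure_union, ← inter_union_distrib_left, inter_eq_left.2 hcov]
  obtain ⟨x, hx, hxu, hxv⟩ := isPreconnected_closed_iff.1 hΩ _ _ isClosed_closure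
    isClosed_closure hsplit ⟨a, interior_subset ha, subset_closure ⟨ha, hau⟩⟩
    ⟨b, interior_subset hb, subset_closure ⟨hb, hbv⟩⟩
  obtain ⟨K, hKΩ, hK, hxK⟩ := hloc x hx
  obtain ⟨a', ha'K, ha'⟩ := mem_closure_iff_nhds.1 hxu _ hxK
  obtain ⟨b', hb'K, hb'⟩ := mem_closure_iff_nhds.1 hxv _ hxK
  obtain ⟨z, hzK, hzuv⟩ := hK u v hu hv (hKΩ.trans hcov) ⟨a', ha'K ha'.1, ha'.2⟩
    ⟨b', hb'K hb'.1, hb'.2⟩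
  exact ⟨z, hKΩ hzK, hzuv⟩

end Topology

section NormedSpace

variable {E : Type*} [NormedAddCommGroup E] [NormedSpace ℝ E]

theorem ContinuousLinearMap.interior_setOf_apply_nonpos {L : StrongDual ℝ E} (hL : L ≠ 0) :
    interior {h | L h ≤ 0} = {h | L h < 0} := by
  have := (L.isOpenMap_of_ne_zero hL).preimage_interior_eq_interior_preimage L.continuous (Iic 0)
  rwa [interior_Iic, eq_comm] at this

theorem tendsto_add_smul_nhds_prod (x h : E) :
    Tendsto (fun p : E × ℝ => p.1 + p.2 • h) (𝓝 x ×ˢ 𝓝 0) (𝓝 x) := by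
  rw [← nhds_prod_eq]
  simpa using Continuous.tendsto (f := fun p : E × ℝ => p.1 + p.2 • h) (by fun_prop) (x, 0)

theorem eventually_forall_Icc_add_smul_mem {x : E} (h : E) {W : Set E} (hW : W ∈ 𝓝 x) :
    ∀ᶠ p : E × ℝ in 𝓝 x ×ˢ 𝓝 0, ∀ s ∈ Icc 0 p.2, p.1 + s • h ∈ W := by
  obtain ⟨δ, hδ, hball⟩ := Metric.mem_nhds_iff.1 hW
  have hsmall : ∀ᶠ t : ℝ in 𝓝 0, |t| * ‖h‖ < δ / 2 := by
    have : Tendsto (fun t : ℝ => |t| * ‖h‖) (𝓝 0) (𝓝 0) := by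
      simpa using Continuous.tendsto (f := fun t : ℝ => |t| * ‖h‖) (by fun_prop) 0
    exact this.eventually (gt_mem_nhds (half_pos hδ))
  filter_upwards [prod_mem_prod (ball_mem_nhds x (half_pos hδ)) hsmall] with ⟨y, t⟩ ⟨hy, ht⟩ s hs
  apply hball
  have hst : |s| ≤ |t| := abs_le_abs_of_nonneg hs.1 hs.2
  calc dist (y + s • h) x = ‖(y - x) + s • h‖ := by rw [dist_eq_norm, add_sub_right_comm]
    _ ≤ ‖y - x‖ + |s| * ‖h‖ := by rw [← Real.norm_eq_abs, ← norm_smul]; exact norm_add_le _ _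
    _ < δ / 2 + δ / 2 := add_lt_add_of_lt_of_le (by rwa [← dist_eq_norm])
      ((mul_le_mul_of_nonneg_right hst (norm_nonneg h)).trans (le_of_lt ht))
    _ = δ := add_halves δ

theorem add_smul_lt_of_forall_Icc_fderiv_apply_neg {f : E → ℝ} {y h : E} {t : ℝ} (ht : 0 < t)
    (hf : ∀ s ∈ Icc 0 t, DifferentiableAt ℝ f (y + s • h) ∧ fderiv ℝ f (y + s • h) h < 0) :
    f (y + t • h) < f y := by
  have hderiv : ∀ s ∈ Icc 0 t,
      HasDerivAt (fun s : ℝ => f (y + s • h)) (fderiv ℝ f (y + s • h) h) s := fun s hs =>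
    (hf s hs).1.hasFDerivAt.comp_hasDerivAt s
      (by simpa using ((hasDerivAt_id s).smul_const h).const_add y)
  have hanti : StrictAntiOn (fun s : ℝ => f (y + s • h)) (Icc 0 t) :=
    strictAntiOn_of_deriv_neg (convex_Icc 0 t)
      (fun s hs => (hderiv s hs).continuousAt.continuousWithinAt) fun s hs => by
        rw [interior_Icc] at hs
        rw [(hderiv s (Ioo_subset_Icc_self hs)).deriv]
        exact (hf s (Ioo_subset_Icc_self hs)).2
  simpa using hanti (left_mem_Icc.2 ht.le) (right_mem_Icc.2 ht.le) ht

theorem eventually_add_smul_lt_of_fderiv_apply_neg {f : E → ℝ} {x h : E}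
    (hdiff : ∀ᶠ z in 𝓝 x, DifferentiableAt ℝ f z) (hcont : ContinuousAt (fderiv ℝ f) x)
    (hneg : fderiv ℝ f x h < 0) :
    ∀ᶠ p : E × ℝ in 𝓝 x ×ˢ 𝓝[>] 0, f (p.1 + p.2 • h) < f p.1 := by
  have hW : ∀ᶠ z in 𝓝 x, DifferentiableAt ℝ f z ∧ fderiv ℝ f z h < 0 :=
    hdiff.and ((hcont.clm_apply continuousAt_const).eventually (gt_mem_nhds hneg))
  filter_upwards [(eventually_forall_Icc_add_smul_mem h hW).filter_mono
    (prod_mono le_rfl nhdsWithin_le_nhds), prod_mem_prod univ_mem self_mem_nhdsWithin]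
    with ⟨y, t⟩ hseg ⟨_, ht⟩
  exact add_smul_lt_of_forall_Icc_fderiv_apply_neg ht hseg

def IsInwardDirection (Ω : Set E) (x h : E) : Prop :=
  ∀ᶠ p : E × ℝ in 𝓝 x ×ˢ 𝓝[>] 0, p.1 ∈ Ω → p.1 + p.2 • h ∈ interior Ω

theorem isInwardDirection_zero_of_mem_interior {Ω : Set E} {x : E} (hx : x ∈ interior Ω) :
    IsInwardDirection Ω x 0 := by
  filter_upwards [prod_mem_prod (isOpen_interior.mem_nhds hx) univ_mem] with p hp _
  simpa using hp.1

namespace IsInwardDirection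

variable {Ω : Set E} {x h : E}

theorem mem_closure_interior (hh : IsInwardDirection Ω x h) (hx : x ∈ Ω) :
    x ∈ closure (interior Ω) := by
  have hpath : Tendsto (fun t : ℝ => (x, t)) (𝓝[>] 0) (𝓝 x ×ˢ 𝓝[>] 0) :=
    tendsto_const_nhds.prodMk tendsto_id
  have hlim : Tendsto (fun t : ℝ => x + t • h) (𝓝[>] 0) (𝓝 x) :=
    (tendsto_add_smul_nhds_prod x h).comp
      (tendsto_const_nhds.prodMk (tendsto_id.mono_left nhdsWithin_le_nhds))
  exact mem_closure_of_tendsto hlim ((hpath.eventually hh).mono fun _ ht => ht hx)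

theorem exists_isPreconnected_subset_interior (hh : IsInwardDirection Ω x h) (hx : x ∈ Ω) :
    ∃ K ⊆ interior Ω, IsPreconnected K ∧ ∀ᶠ y in 𝓝 x, y ∈ interior Ω → y ∈ K := by
  obtain ⟨N, hN, T, hT, hNT⟩ := mem_prod_iff.1 hh
  obtain ⟨τ, hτ, hτT⟩ := mem_nhdsGT_iff_exists_Ioo_subset.1 hT
  have hNτ : ∀ y ∈ N, y ∈ Ω → ∀ t ∈ Ioo 0 τ, y + t • h ∈ interior Ω :=
    fun y hy hyΩ t ht => hNT (mk_mem_prod hy (hτT ht)) hyΩ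
  set t₀ := τ / 2
  have ht₀ : t₀ ∈ Ioo 0 τ := ⟨half_pos hτ, half_lt_self hτ⟩
  have hseg : ∀ y ∈ N, y ∈ interior Ω → (fun t : ℝ => y + t • h) '' Icc 0 t₀ ⊆ interior Ω := by
    rintro y hyN hy _ ⟨t, ht, rfl⟩
    rcases ht.1.eq_or_lt with rfl | hpos
    · simpa using hy
    · exact hNτ y hyN (interior_subset hy) t ⟨hpos, ht.2.trans_lt ht₀.2⟩
  obtain ⟨r, hr, hball⟩ :=
    Metric.isOpen_iff.1 isOpen_interior _ (hNτ x (mem_of_mem_nhds hN) hx t₀ ht₀)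
  set S := N ∩ ball x r ∩ interior Ω
  let piece (y : S) : Set E := (fun t : ℝ => (y : E) + t • h) '' Icc 0 t₀ ∪ ball (x + t₀ • h) r
  refine ⟨⋃ y, piece y, iUnion_subset fun y => union_subset (hseg y y.2.1.1 y.2.2) hball,
    isPreconnected_iUnion ⟨x + t₀ • h, mem_iInter.2 fun _ => Or.inr (mem_ball_self hr)⟩
      fun y => ?_, ?_⟩
  · refine (isPreconnected_Icc.image _ (by fun_prop : Continuous _).continuousOn).union
      ((y : E) + t₀ • h) ⟨t₀, ⟨ht₀.1.le, le_rfl⟩, rfl⟩ ?_ (convex_ball _ _).isPreconnected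
    rw [mem_ball, dist_add_right]
    exact y.2.1.2
  · filter_upwards [inter_mem hN (ball_mem_nhds x hr)] with y hy hyΩ
    exact mem_iUnion.2 ⟨⟨y, hy, hyΩ⟩, Or.inl ⟨0, ⟨le_rfl, ht₀.1.le⟩, by simp⟩⟩

end IsInwardDirection

theorem eq_closure_interior_and_isPreconnected_interior {Ω : Set E} (hcl : IsClosed Ω)
    (hconn : IsPreconnected Ω) (hinward : ∀ x ∈ frontier Ω, ∃ h, IsInwardDirection Ω x h) :
    Ω = closure (interior Ω) ∧ IsPreconnected (interior Ω) := by
  have hall : ∀ x ∈ Ω, ∃ h, IsInwardDirection Ω x h := fun x hx => by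
    by_cases hxi : x ∈ interior Ω
    · exact ⟨0, isInwardDirection_zero_of_mem_interior hxi⟩
    · exact hinward x ⟨subset_closure hx, hxi⟩
  have hreg : Ω ⊆ closure (interior Ω) := fun x hx =>
    (hall x hx).elim fun _ hh => hh.mem_closure_interior hx
  refine ⟨hreg.antisymm (closure_minimal interior_subset hcl),
    hconn.isPreconnected_interior hreg fun x hx => ?_⟩
  obtain ⟨_, hh⟩ := hall x hx
  exact hh.exists_isPreconnected_subset_interior hx

end NormedSpace

section Constraints

variable {n : ℕ} {U : Set (EuclideanSpace ℝ (Fin n))}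

theorem C11SubmersionOnZeroSet.eventually_add_smul_lt {g : EuclideanSpace ℝ (Fin n) → ℝ}
    (hg : C11SubmersionOnZeroSet U g) {x h : EuclideanSpace ℝ (Fin n)} (hxU : x ∈ U)
    (hx : g x = 0) (hneg : fderiv ℝ g x h < 0) :
    ∀ᶠ p : EuclideanSpace ℝ (Fin n) × ℝ in 𝓝 x ×ˢ 𝓝[>] 0, g (p.1 + p.2 • h) < g p.1 := by
  obtain ⟨⟨V, hV, hxV, _, hdiff, _, hlip⟩, _⟩ := hg x hxU hx
  exact eventually_add_smul_lt_of_fderiv_apply_neg (eventually_of_mem (hV.mem_nhds hxV) hdiff)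
    (hlip.continuousOn.continuousAt (hV.mem_nhds hxV)) hneg

theorem isInwardDirection_of_mem_interior_cone {ι : Type*} [Finite ι] (hU : IsOpen U)
    {g : ι → EuclideanSpace ℝ (Fin n) → ℝ} (hgc : ∀ i, ContinuousOn (g i) U)
    (hgs : ∀ i, C11SubmersionOnZeroSet U (g i)) {x h : EuclideanSpace ℝ (Fin n)}
    (hx : x ∈ {x | x ∈ U ∧ ∀ i, g i x ≤ 0})
    (hh : h ∈ interior {h | ∀ j, g j x = 0 → fderiv ℝ (g j) x h ≤ 0}) :
    IsInwardDirection {x | x ∈ U ∧ ∀ i, g i x ≤ 0} x h := by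
  set Ω := {x | x ∈ U ∧ ∀ i, g i x ≤ 0}
  have hstrict : {z | z ∈ U ∧ ∀ i, g i z < 0} ⊆ interior Ω :=
    interior_maximal (fun z hz => ⟨hz.1, fun i => (hz.2 i).le⟩)
      (isOpen_setOf_mem_and_forall_lt_zero hU hgc)
  have htend : Tendsto (fun p : EuclideanSpace ℝ (Fin n) × ℝ => p.1 + p.2 • h)
      (𝓝 x ×ˢ 𝓝[>] 0) (𝓝 x) :=
    (tendsto_add_smul_nhds_prod x h).mono_left (prod_mono le_rfl nhdsWithin_le_nhds)
  have hconstr : ∀ i, ∀ᶠ p : EuclideanSpace ℝ (Fin n) × ℝ in 𝓝 x ×ˢ 𝓝[>] 0,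
      p.1 ∈ Ω → g i (p.1 + p.2 • h) < 0 := by
    intro i
    rcases (hx.2 i).lt_or_eq with hlt | hzero
    · exact (htend.eventually (((hgc i).continuousAt (hU.mem_nhds hx.1)).eventually
        (gt_mem_nhds hlt))).mono fun _ hp _ => hp
    · have hneg : fderiv ℝ (g i) x h < 0 := by
        have hcone : interior {h | ∀ j, g j x = 0 → fderiv ℝ (g j) x h ≤ 0} ⊆
            interior {h | fderiv ℝ (g i) x h ≤ 0} := interior_mono fun _ hh' => hh' i hzero
        have := hcone hh
        rwa [ContinuousLinearMap.interior_setOf_apply_nonpos ((hgs i) x hx.1 hzero).2] at this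
      filter_upwards [(hgs i).eventually_add_smul_lt hx.1 hzero hneg] with p hp hpΩ
      exact hp.trans_le (hpΩ.2 i)
  filter_upwards [htend.eventually (hU.mem_nhds hx.1), eventually_all.2 hconstr]
    with p hpU hpg hpΩ
  exact hstrict ⟨hpU, fun i => hpg i hpΩ⟩

end Constraints

theorem regular_closed_and_interior_connected_general {n m : ℕ}
    (U : Set (EuclideanSpace ℝ (Fin n))) (hU : IsOpen U)
    (g : Fin m → EuclideanSpace ℝ (Fin n) → ℝ)
    (hgc : ∀ i, ContinuousOn (g i) U)
    (hgs : ∀ i, C11SubmersionOnZeroSet U (g i))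
    (Ω : Set (EuclideanSpace ℝ (Fin n)))
    (hΩ : Ω = {x | x ∈ U ∧ ∀ i, g i x ≤ 0})
    (hcl : IsClosed Ω) (hconn : IsPreconnected Ω)
    (hcone : ∀ x ∈ frontier Ω,
      (interior {h : EuclideanSpace ℝ (Fin n) |
          ∀ j, g j x = 0 → fderiv ℝ (g j) x h ≤ 0}).Nonempty) :
    Ω = closure (interior Ω) ∧ IsPreconnected (interior Ω) := by
  subst hΩ
  refine eq_closure_interior_and_isPreconnected_interior hcl hconn fun x hx => ?_
  obtain ⟨h, hh⟩ := hcone x hx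
  exact ⟨h, isInwardDirection_of_mem_interior_cone hU hgc hgs (hcl.frontier_subset hx) hh⟩

/-- Lemma 17: if the interior of the cone `C(x)` is nonempty at every boundary point of
the connected closed sublevel set `Ω`, then `Ω` is regular closed and its interior is
connected. -/
theorem regular_closed_and_interior_connected {n m : ℕ} (hm : 0 < m)
    (U : Set (EuclideanSpace ℝ (Fin n))) (hU : IsOpen U)
    (g : Fin m → EuclideanSpace ℝ (Fin n) → ℝ)
    (hgc : ∀ i, ContinuousOn (g i) U)
    (hgs : ∀ i, C11SubmersionOnZeroSet U (g i))
    (Ω : Set (EuclideanSpace ℝ (Fin n)))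
    (hΩ : Ω = {x | x ∈ U ∧ ∀ i, g i x ≤ 0})
    (hcl : IsClosed Ω) (hconn : IsPreconnected Ω)
    (hcone : ∀ x ∈ frontier Ω,
      (interior {h : EuclideanSpace ℝ (Fin n) |
          ∀ j, g j x = 0 → fderiv ℝ (g j) x h ≤ 0}).Nonempty) :
    Ω = closure (interior Ω) ∧ IsPreconnected (interior Ω) :=
  regular_closed_and_interior_connected_general U hU g hgc hgs Ω hΩ hcl hconn hcone
end

section
/- Let U ⊆ ℝⁿ be open, g : U → ℝ of class C¹, Ω = {x ∈ U | g(x) ≤ 0}, and assume g(0) = 0 and g'(0)p < 0 for some p ∈ ℝⁿ. Then there exists ε > 0 such that for every q = t·p with t ∈ (0, ε]: the line segment conv{0, q} with the point 0 removed is contained in the interior of Ω, and there exists an open neighborhood V ⊆ ℝⁿ of the segment conv{0, q} such that V ∩ int Ω is star-shaped with respect to q (i.e. for every y ∈ V ∩ int Ω the segment conv{y, q} is contained in V ∩ int Ω). -/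
/-!
Near `0` the derivative of `g` is uniformly negative on a small ball of directions around `p`, hence
on the open cone `K` these directions span: by the mean value theorem `g` strictly decreases along
every segment of a small ball `B` pointing into `K`. Taking `q = t • p ∈ B`, `g < 0` on the punctured
segment `(0, q]`, and `V = {x ∈ B | q - x ∈ K} ∪ W` with `W` a small ball around `q` on which `g < 0`
does the job: walking from `y ∈ V` towards `q` keeps `q - x` in `K` and decreases `g`.
-/

open Metric Set

variable {E : Type*} [NormedAddCommGroup E] [NormedSpace ℝ E]

section PosCone

def posCone (S : Set E) : Set E := {w | ∃ α : ℝ, 0 < α ∧ α • w ∈ S}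

variable {S : Set E} {w x y z : E}

lemma subset_posCone : S ⊆ posCone S := fun w hw => ⟨1, one_pos, by rwa [one_smul]⟩

lemma isOpen_posCone (hS : IsOpen S) : IsOpen (posCone S) := by
  have : posCone S = ⋃ α ∈ Ioi (0 : ℝ), (α • ·) ⁻¹' S := by
    ext w
    simp [posCone]
  rw [this]
  exact isOpen_biUnion fun α _ => hS.preimage (continuous_const_smul α)

lemma smul_mem_posCone {β : ℝ} (hβ : 0 < β) (hw : w ∈ posCone S) : β • w ∈ posCone S := by
  obtain ⟨α, hα, hαw⟩ := hw
  exact ⟨α / β, div_pos hα hβ, by rwa [smul_smul, div_mul_cancel₀ _ hβ.ne']⟩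

lemma apply_neg_of_mem_posCone {f : E →L[ℝ] ℝ} (hf : ∀ v ∈ S, f v < 0) (hw : w ∈ posCone S) :
    f w < 0 := by
  obtain ⟨α, hα, hαw⟩ := hw
  have := hf _ hαw
  rw [map_smul, smul_eq_mul] at this
  exact neg_of_mul_neg_right this hα.le

lemma sub_left_mem_posCone_of_mem_segment (hxy : y - x ∈ posCone S) (hz : z ∈ segment ℝ x y)
    (hzx : z ≠ x) : z - x ∈ posCone S := by
  rw [segment_eq_image'] at hz
  obtain ⟨θ, hθ, rfl⟩ := hz
  have hθ0 : θ ≠ 0 := by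
    rintro rfl
    simp at hzx
  rw [add_sub_cancel_left]
  exact smul_mem_posCone (hθ.1.lt_of_ne' hθ0) hxy

lemma right_sub_mem_posCone_of_mem_segment (hxy : y - x ∈ posCone S) (hz : z ∈ segment ℝ x y)
    (hzy : z ≠ y) : y - z ∈ posCone S := by
  rw [segment_eq_image'] at hz
  obtain ⟨θ, hθ, rfl⟩ := hz
  have hθ1 : θ ≠ 1 := by
    rintro rfl
    simp at hzy
  have : y - (x + θ • (y - x)) = (1 - θ) • (y - x) := by module
  rw [this]
  exact smul_mem_posCone (sub_pos.2 (hθ.2.lt_of_ne hθ1)) hxy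

end PosCone

lemma subset_interior_sublevel {X : Type*} [TopologicalSpace X] {U : Set X} {g : X → ℝ}
    (hU : IsOpen U) (hg : ContinuousOn g U) :
    {x | x ∈ U ∧ g x < 0} ⊆ interior {x | x ∈ U ∧ g x ≤ 0} :=
  interior_maximal (fun _ hx => ⟨hx.1, hx.2.le⟩) (hg.isOpen_inter_preimage hU isOpen_Iio)

section Descent

variable {g : E → ℝ} {U B S W : Set E} {q x y : E}

lemma Convex.lt_of_fderiv_neg (hB : Convex ℝ B) (hg : ∀ z ∈ B, DifferentiableAt ℝ g z)
    (hx : x ∈ B) (hy : y ∈ B) (hneg : ∀ z ∈ B, fderiv ℝ g z (y - x) < 0) : g y < g x := by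
  obtain ⟨z, hz, hmvt⟩ :=
    domain_mvt (fun z hz => (hg z hz).hasFDerivAt.hasFDerivWithinAt) hB hx hy
  linarith [hneg z (hB.segment_subset hx hy hz)]

lemma exists_ball_fderiv_neg (hU : IsOpen U) (hg : ContDiffOn ℝ 1 g U) {x₀ p : E} (hx₀ : x₀ ∈ U)
    (hp : fderiv ℝ g x₀ p < 0) :
    ∃ r > 0, ball x₀ r ⊆ U ∧ ∀ x ∈ ball x₀ r, ∀ v ∈ ball p r, fderiv ℝ g x v < 0 := by
  have hcont : ContinuousOn (fun z : E × E => fderiv ℝ g z.1 z.2) (U ×ˢ univ) :=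
    ((hg.continuousOn_fderiv_of_isOpen hU le_rfl).comp continuousOn_fst
      fun z hz => hz.1).clm_apply continuousOn_snd
  obtain ⟨r, hr, hball⟩ := Metric.isOpen_iff.mp
    (hcont.isOpen_inter_preimage (hU.prod isOpen_univ) isOpen_Iio) (x₀, p) ⟨⟨hx₀, trivial⟩, hp⟩
  rw [← ball_prod_same] at hball
  exact ⟨r, hr, fun x hx => (hball (mk_mem_prod hx (mem_ball_self hr))).1.1,
    fun x hx v hv => (hball (mk_mem_prod hx hv)).2⟩

variable (hB : Convex ℝ B) (hdesc : ∀ x ∈ B, ∀ y ∈ B, y - x ∈ posCone S → g y < g x)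
include hB

include hdesc in
lemma segment_diff_subset_of_descent (hx : x ∈ B) (hy : y ∈ B) (hxy : y - x ∈ posCone S) :
    segment ℝ x y \ {x} ⊆ {z | z ∈ B ∧ g z < g x} := fun z ⟨hz, hzx⟩ =>
  have hzB := hB.segment_subset hx hy hz
  ⟨hzB, hdesc x hx z hzB (sub_left_mem_posCone_of_mem_segment hxy hz hzx)⟩

lemma segment_subset_union (hx : x ∈ B) (hq : q ∈ B) (hxq : q - x ∈ posCone S) (hqW : q ∈ W) :
    segment ℝ x q ⊆ (B ∩ {z | q - z ∈ posCone S}) ∪ W := by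
  intro z hz
  by_cases hzq : z = q
  · exact Or.inr (hzq ▸ hqW)
  · exact Or.inl ⟨hB.segment_subset hx hq hz, right_sub_mem_posCone_of_mem_segment hxq hz hzq⟩

include hdesc in
lemma segment_subset_union_inter_interior (hU : IsOpen U) (hg : ContinuousOn g U) (hBU : B ⊆ U)
    (hqB : q ∈ B) (hW : Convex ℝ W) (hqW : q ∈ W) (hWneg : W ⊆ {x | x ∈ U ∧ g x < 0})
    (hy : y ∈ ((B ∩ {z | q - z ∈ posCone S}) ∪ W) ∩ interior {x | x ∈ U ∧ g x ≤ 0}) :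
    segment ℝ y q ⊆ ((B ∩ {z | q - z ∈ posCone S}) ∪ W) ∩ interior {x | x ∈ U ∧ g x ≤ 0} := by
  have hint := subset_interior_sublevel hU hg
  obtain ⟨hyB | hyW, hyΩ⟩ := hy
  · intro z hz
    refine ⟨segment_subset_union hB hyB.1 hqB hyB.2 hqW hz, ?_⟩
    rcases eq_or_ne z y with rfl | hzy
    · exact hyΩ
    obtain ⟨hzB, hzy⟩ := segment_diff_subset_of_descent hB hdesc hyB.1 hqB hyB.2 ⟨hz, hzy⟩
    exact hint ⟨hBU hzB, hzy.trans_le (interior_subset hyΩ).2⟩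
  · intro z hz
    have hzW := hW.segment_subset hyW hqW hz
    exact ⟨Or.inr hzW, hint (hWneg hzW)⟩

end Descent

/-- Lemma 18: if `g(0) = 0` and `g'(0)p < 0`, then for all sufficiently small positive
multiples `q = t • p` of `p`, the half-open segment from `0` to `q` lies in the interior of
`Ω = {x ∈ U | g x ≤ 0}`, and some open neighborhood `V` of the segment `conv{0, q}` is such
that `V ∩ int Ω` is star-shaped with respect to `q`. -/
theorem starShaped_neighborhood_of_descent_direction {n : ℕ}
    (U : Set (EuclideanSpace ℝ (Fin n))) (hU : IsOpen U)
    (g : EuclideanSpace ℝ (Fin n) → ℝ) (hg : ContDiffOn ℝ 1 g U)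
    (Ω : Set (EuclideanSpace ℝ (Fin n)))
    (hΩ : Ω = {x | x ∈ U ∧ g x ≤ 0})
    (h0U : (0 : EuclideanSpace ℝ (Fin n)) ∈ U) (hg0 : g 0 = 0)
    (p : EuclideanSpace ℝ (Fin n)) (hp : fderiv ℝ g 0 p < 0) :
    ∃ ε > (0:ℝ), ∀ t ∈ Set.Ioc (0:ℝ) ε,
      (segment ℝ 0 (t • p) \ {0} ⊆ interior Ω) ∧
      ∃ V : Set (EuclideanSpace ℝ (Fin n)), IsOpen V ∧ segment ℝ 0 (t • p) ⊆ V ∧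
        ∀ y ∈ V ∩ interior Ω, segment ℝ y (t • p) ⊆ V ∩ interior Ω := by
  subst hΩ
  obtain ⟨r, hr, hBU, hBneg⟩ := exists_ball_fderiv_neg hU hg h0U hp
  have hgc : ContinuousOn g U := hg.continuousOn
  have hB := convex_ball (0 : EuclideanSpace ℝ (Fin n)) r
  have hdesc : ∀ x ∈ ball 0 r, ∀ y ∈ ball 0 r, y - x ∈ posCone (ball p r) → g y < g x :=
    fun x hx y hy hxy => hB.lt_of_fderiv_neg
      (fun z hz => (hg.differentiableOn one_ne_zero z (hBU hz)).differentiableAt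
        (hU.mem_nhds (hBU hz))) hx hy fun z hz => apply_neg_of_mem_posCone (hBneg z hz) hxy
  refine ⟨r / (‖p‖ + 1), by positivity, fun t ht => ?_⟩
  have hq : t • p - 0 ∈ posCone (ball p r) := by
    rw [sub_zero]
    exact smul_mem_posCone ht.1 (subset_posCone (mem_ball_self hr))
  have hqB : t • p ∈ ball 0 r := by
    rw [mem_ball_zero_iff, norm_smul, Real.norm_of_nonneg ht.1.le]
    calc t * ‖p‖ ≤ r / (‖p‖ + 1) * ‖p‖ := by gcongr; exact ht.2
      _ < r := by rw [div_mul_eq_mul_div, div_lt_iff₀ (by positivity)]; nlinarith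
  have hneg : segment ℝ 0 (t • p) \ {0} ⊆ {x | x ∈ U ∧ g x < 0} := fun z hz =>
    have hz := segment_diff_subset_of_descent hB hdesc (mem_ball_self hr) hqB hq hz
    ⟨hBU hz.1, hg0 ▸ hz.2⟩
  obtain ⟨δ, hδ, hδneg⟩ := Metric.isOpen_iff.mp (hgc.isOpen_inter_preimage hU isOpen_Iio) (t • p)
    ⟨hBU hqB, hg0 ▸ hdesc 0 (mem_ball_self hr) _ hqB hq⟩
  set V := (ball 0 r ∩ {z | t • p - z ∈ posCone (ball p r)}) ∪ ball (t • p) δ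
  have hV : IsOpen V := (isOpen_ball.inter ((isOpen_posCone isOpen_ball).preimage
    (continuous_const.sub continuous_id))).union isOpen_ball
  exact ⟨hneg.trans (subset_interior_sublevel hU hgc), V, hV,
    segment_subset_union hB (mem_ball_self hr) hqB hq (mem_ball_self hδ),
    fun y hy => segment_subset_union_inter_interior hB hdesc hU hgc hBU hqB (convex_ball _ δ)
      (mem_ball_self hδ) hδneg hy⟩
end
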